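/- Let v be a smooth function on Ω = 𝕋² × [0,1] vanishing on both the bottom {x₃=0} and the top {x₃=1}. Then the L^∞ norm of v over Ω satisfies ‖v‖_{L^∞(Ω)} ≲ (‖v‖_{L²}^{1/4} ‖∂''v‖_{L²}^{1/4} + ‖v‖_{L²}^{1/2}) · (‖∂₃v‖_{L²}^{1/4} ‖∂₃∂''v‖_{L²}^{1/4} + ‖∂₃v‖_{L²}^{1/2}), where ∂'' denotes any (all) second-order horizontal derivatives, i.e. the right-hand side uses the full horizontal Hessian norms. -/

import Mathlib

/-- The `L²` norm over the unit cube (one periodic cell of `𝕋² × [0,1]`). -/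
noncomputable def L2cube (f : ℝ → ℝ → ℝ → ℝ) : ℝ :=
  Real.sqrt (∫ x in (0:ℝ)..1, ∫ y in (0:ℝ)..1, ∫ z in (0:ℝ)..1, (f x y z) ^ 2)

/-- First horizontal partial derivative. -/
noncomputable def d1 (f : ℝ → ℝ → ℝ → ℝ) : ℝ → ℝ → ℝ → ℝ :=
  fun x y z => deriv (fun s => f s y z) x

/-- Second horizontal partial derivative. -/
noncomputable def d2 (f : ℝ → ℝ → ℝ → ℝ) : ℝ → ℝ → ℝ → ℝ :=
  fun x y z => deriv (fun s => f x s z) y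

/-- Vertical partial derivative. -/
noncomputable def d3 (f : ℝ → ℝ → ℝ → ℝ) : ℝ → ℝ → ℝ → ℝ :=
  fun x y z => deriv (fun s => f x y s) z

/-- The `L²` norm of the full horizontal Hessian `∂''f`. -/
noncomputable def hess2 (f : ℝ → ℝ → ℝ → ℝ) : ℝ :=
  Real.sqrt ((L2cube (d1 (d1 f))) ^ 2 + (L2cube (d1 (d2 f))) ^ 2 +
    (L2cube (d2 (d1 f))) ^ 2 + (L2cube (d2 (d2 f))) ^ 2)

open MeasureTheory intervalIntegral Set

/-! ### Basic 1D lemmas -/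

section OneD

/-- Cauchy–Schwarz for interval integrals of continuous functions. -/
lemma myCS (f g : ℝ → ℝ) (hf : Continuous f) (hg : Continuous g) :
    (∫ t in (0:ℝ)..1, |f t * g t|) ≤
      Real.sqrt (∫ t in (0:ℝ)..1, f t ^ 2) * Real.sqrt (∫ t in (0:ℝ)..1, g t ^ 2) := by
  set A := ∫ t in (0:ℝ)..1, f t ^ 2 with hA
  set B := ∫ t in (0:ℝ)..1, g t ^ 2 with hB
  set C := ∫ t in (0:ℝ)..1, |f t * g t| with hC
  have hAnn : 0 ≤ A := intervalIntegral.integral_nonneg zero_le_one (fun u _ => sq_nonneg _)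
  have hBnn : 0 ≤ B := intervalIntegral.integral_nonneg zero_le_one (fun u _ => sq_nonneg _)
  have hCnn : 0 ≤ C := intervalIntegral.integral_nonneg zero_le_one (fun u _ => abs_nonneg _)
  have key : ∀ r : ℝ, 0 ≤ A * (r * r) + (-2 * C) * r + B := by
    intro r
    have h1 : (0:ℝ) ≤ ∫ t in (0:ℝ)..1, (r * |f t| - |g t|) ^ 2 :=
      intervalIntegral.integral_nonneg zero_le_one (fun u _ => sq_nonneg _)
    have h2 : (∫ t in (0:ℝ)..1, (r * |f t| - |g t|) ^ 2)
        = A * (r * r) + (-2 * C) * r + B := by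
      have e : ∀ t : ℝ, (r * |f t| - |g t|) ^ 2
          = (r * r) * f t ^ 2 + (-2 * r) * |f t * g t| + g t ^ 2 := by
        intro t
        have h1 : |f t| ^ 2 = f t ^ 2 := sq_abs _
        have h2 : |g t| ^ 2 = g t ^ 2 := sq_abs _
        have h3 : |f t * g t| = |f t| * |g t| := abs_mul _ _
        rw [h3, ← h1, ← h2]; ring
      rw [intervalIntegral.integral_congr (fun t _ => e t)]
      have if2 : IntervalIntegrable (fun t => f t ^ 2) volume 0 1 :=
        (hf.pow 2).intervalIntegrable _ _
      have ig2 : IntervalIntegrable (fun t => g t ^ 2) volume 0 1 :=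
        (hg.pow 2).intervalIntegrable _ _
      have ifg : IntervalIntegrable (fun t => |f t * g t|) volume 0 1 :=
        ((hf.mul hg).abs).intervalIntegrable _ _
      rw [intervalIntegral.integral_add ((if2.const_mul _).add (ifg.const_mul _)) ig2,
        intervalIntegral.integral_add (if2.const_mul _) (ifg.const_mul _),
        intervalIntegral.integral_const_mul, intervalIntegral.integral_const_mul]
      ring
    linarith [h1, h2]
  have hd : discrim A (-2 * C) B ≤ 0 := discrim_le_zero key
  rw [discrim] at hd
  have hC2 : C ^ 2 ≤ A * B := by nlinarith
  calc C = Real.sqrt (C ^ 2) := (Real.sqrt_sq hCnn).symm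
    _ ≤ Real.sqrt (A * B) := Real.sqrt_le_sqrt hC2
    _ = Real.sqrt A * Real.sqrt B := Real.sqrt_mul hAnn _

/-- |∫ₐˣ h| ≤ ∫₀¹ |h| for a,x ∈ [0,1], h continuous. -/
lemma mySub (h : ℝ → ℝ) (hh : Continuous h) {a x : ℝ} (ha : a ∈ Icc (0:ℝ) 1)
    (hx : x ∈ Icc (0:ℝ) 1) :
    |∫ t in a..x, h t| ≤ ∫ t in (0:ℝ)..1, |h t| := by
  have h1 : |∫ t in a..x, h t| ≤ abs (∫ t in a..x, abs (h t)) := by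
    simpa using intervalIntegral.norm_integral_le_abs_integral_norm (f := h) (a := a) (b := x)
  have h2 : abs (∫ t in a..x, abs (h t)) ≤ abs (∫ t in (0:ℝ)..1, abs (h t)) := by
    apply intervalIntegral.abs_integral_mono_interval
    · rcases le_total a x with hax | hax
      · rw [uIoc_of_le hax, uIoc_of_le zero_le_one]
        exact Ioc_subset_Ioc ha.1 hx.2
      · rw [uIoc_of_ge hax, uIoc_of_le zero_le_one]
        exact Ioc_subset_Ioc hx.1 ha.2
    · exact Filter.Eventually.of_forall fun t => abs_nonneg _
    · exact hh.abs.intervalIntegrable _ _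
  have h3 : abs (∫ t in (0:ℝ)..1, abs (h t)) = ∫ t in (0:ℝ)..1, |h t| :=
    abs_of_nonneg (intervalIntegral.integral_nonneg zero_le_one fun u _ => abs_nonneg _)
  linarith

/-- 1D square bound via FTC. -/
lemma oneD_sq (f : ℝ → ℝ) (hf : Differentiable ℝ f) (hf' : Continuous (deriv f))
    {a x : ℝ} (ha : a ∈ Icc (0:ℝ) 1) (hx : x ∈ Icc (0:ℝ) 1) :
    f x ^ 2 ≤ f a ^ 2 + 2 * ∫ t in (0:ℝ)..1, |f t * deriv f t| := by
  have hder : ∀ t ∈ uIcc a x, HasDerivAt (fun u => f u ^ 2) (2 * (f t * deriv f t)) t := by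
    intro t _
    have := ((hf t).hasDerivAt).pow 2
    have h' : HasDerivAt (f ^ 2) (2 * (f t * deriv f t)) t := by
      simpa [mul_assoc, mul_comm, mul_left_comm] using this
    exact h'
  have hint : IntervalIntegrable (fun t => 2 * (f t * deriv f t)) volume a x :=
    (continuous_const.mul (hf.continuous.mul hf')).intervalIntegrable _ _
  have hftc : ∫ t in a..x, 2 * (f t * deriv f t) = f x ^ 2 - f a ^ 2 :=
    intervalIntegral.integral_eq_sub_of_hasDerivAt hder hint
  have habs : |∫ t in a..x, 2 * (f t * deriv f t)| ≤ ∫ t in (0:ℝ)..1, |2 * (f t * deriv f t)| :=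
    mySub _ (continuous_const.mul (hf.continuous.mul hf')) ha hx
  have h2 : (∫ t in (0:ℝ)..1, |2 * (f t * deriv f t)|)
      = 2 * ∫ t in (0:ℝ)..1, |f t * deriv f t| := by
    rw [← intervalIntegral.integral_const_mul]
    apply intervalIntegral.integral_congr
    intro t _
    simp only [abs_mul, abs_two]
  have := abs_le.mp ((hftc ▸ habs).trans h2.le)
  linarith [this.2, (le_abs_self (f x ^2 - f a ^2)), this.1]

/-- 1D averaged Agmon-type bound. -/
lemma oneD_avg (f : ℝ → ℝ) (hf : Differentiable ℝ f) (hf' : Continuous (deriv f))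
    {x : ℝ} (hx : x ∈ Icc (0:ℝ) 1) :
    f x ^ 2 ≤ (∫ a in (0:ℝ)..1, f a ^ 2) + 2 * ∫ t in (0:ℝ)..1, |f t * deriv f t| := by
  set K := 2 * ∫ t in (0:ℝ)..1, |f t * deriv f t| with hK
  have h1 : ∀ a ∈ Icc (0:ℝ) 1, f x ^ 2 - K ≤ f a ^ 2 := by
    intro a ha
    have := oneD_sq f hf hf' ha hx
    linarith
  have h2 : (∫ a in (0:ℝ)..1, (f x ^ 2 - K)) ≤ ∫ a in (0:ℝ)..1, f a ^ 2 := by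
    apply intervalIntegral.integral_mono_on zero_le_one
      (intervalIntegrable_const) ((hf.continuous.pow 2).intervalIntegrable _ _) h1
  simpa using h2

/-- Dirichlet version. -/
lemma oneD_dir (f : ℝ → ℝ) (hf : Differentiable ℝ f) (hf' : Continuous (deriv f))
    (h0 : f 0 = 0) {x : ℝ} (hx : x ∈ Icc (0:ℝ) 1) :
    f x ^ 2 ≤ 2 * ∫ t in (0:ℝ)..1, |f t * deriv f t| := by
  have := oneD_sq f hf hf' (a := 0) ⟨le_refl _, zero_le_one⟩ hx
  rw [h0] at this
  simpa using this

/-- Derivative of a periodic function is periodic. -/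
lemma periodic_deriv' (f : ℝ → ℝ) (hper : Function.Periodic f 1) :
    Function.Periodic (deriv f) 1 := by
  intro x
  have h : (fun y => f (y + 1)) = f := hper.funext
  calc deriv f (x + 1) = deriv (fun y => f (y + 1)) x := (deriv_comp_add_const f 1 x).symm
    _ = deriv f x := by rw [h]

/-- Integration by parts for periodic functions. -/
lemma myIBP (f : ℝ → ℝ) (hf : Differentiable ℝ f) (hf' : Differentiable ℝ (deriv f))
    (hf'' : Continuous (deriv (deriv f))) (hper : Function.Periodic f 1) :
    (∫ x in (0:ℝ)..1, (deriv f x) ^ 2) = -∫ x in (0:ℝ)..1, f x * deriv (deriv f) x := by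
  have hder : ∀ x ∈ uIcc (0:ℝ) 1, HasDerivAt (fun u => f u * deriv f u)
      ((deriv f x) ^ 2 + f x * deriv (deriv f) x) x := by
    intro x _
    have h1 := (hf x).hasDerivAt
    have h2 := (hf' x).hasDerivAt
    have := h1.mul h2
    have h' : HasDerivAt (f * deriv f) ((deriv f x) ^ 2 + f x * deriv (deriv f) x) x := by
      simpa [sq, mul_comm, mul_assoc, mul_left_comm, add_comm] using this
    exact h'
  have hint : IntervalIntegrable (fun x => (deriv f x) ^ 2 + f x * deriv (deriv f) x)
      volume 0 1 :=
    (((hf'.continuous.pow 2)).add (hf.continuous.mul hf'')).intervalIntegrable _ _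
  have hftc := intervalIntegral.integral_eq_sub_of_hasDerivAt hder hint
  have hbd : f 1 * deriv f 1 - f 0 * deriv f 0 = 0 := by
    have e1 : f 1 = f 0 := by simpa using hper 0
    have e2 : deriv f 1 = deriv f 0 := by simpa using periodic_deriv' f hper 0
    rw [e1, e2]; ring
  rw [hbd] at hftc
  have hsplit : (∫ x in (0:ℝ)..1, ((deriv f x) ^ 2 + f x * deriv (deriv f) x))
      = (∫ x in (0:ℝ)..1, (deriv f x) ^ 2) + ∫ x in (0:ℝ)..1, f x * deriv (deriv f) x :=
    intervalIntegral.integral_add ((hf'.continuous.pow 2).intervalIntegrable _ _)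
      ((hf.continuous.mul hf'').intervalIntegrable _ _)
  rw [hsplit] at hftc
  linarith

end OneD

/-! ### Continuity and Fubini infrastructure -/

section Infra

/-- Uncurried form of a 3-variable function. -/
def unc (g : ℝ → ℝ → ℝ → ℝ) : ℝ × ℝ × ℝ → ℝ := fun p => g p.1 p.2.1 p.2.2

/-- Continuity of uncurried 3-variable function. -/
abbrev Cont3 (g : ℝ → ℝ → ℝ → ℝ) : Prop := Continuous (unc g)

lemma contP1 (F : ℝ → ℝ → ℝ) (hF : Continuous fun p : ℝ × ℝ => F p.1 p.2) :
    Continuous fun x => ∫ y in (0:ℝ)..1, F x y :=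
  intervalIntegral.continuous_parametric_intervalIntegral_of_continuous' (f := F) hF 0 1

lemma contP2 (g : ℝ → ℝ → ℝ → ℝ) (hg : Cont3 g) :
    Continuous fun p : ℝ × ℝ => ∫ z in (0:ℝ)..1, g p.1 p.2 z := by
  apply intervalIntegral.continuous_parametric_intervalIntegral_of_continuous'
    (f := fun p : ℝ × ℝ => fun z => g p.1 p.2 z)
  exact hg.comp ((continuous_fst.fst).prodMk ((continuous_fst.snd).prodMk continuous_snd))

lemma contP12 (g : ℝ → ℝ → ℝ → ℝ) (hg : Cont3 g) :
    Continuous fun x => ∫ y in (0:ℝ)..1, ∫ z in (0:ℝ)..1, g x y z :=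
  contP1 (fun x y => ∫ z in (0:ℝ)..1, g x y z) (contP2 g hg)

/-- Continuity of `t ↦ ∫∫ q a b t`. -/
lemma contP_tb (q : ℝ → ℝ → ℝ → ℝ) (hq : Cont3 q) :
    Continuous fun t => ∫ b in (0:ℝ)..1, ∫ a in (0:ℝ)..1, q a b t := by
  apply contP1
  apply intervalIntegral.continuous_parametric_intervalIntegral_of_continuous'
    (f := fun p : ℝ × ℝ => fun a => q a p.2 p.1)
  exact hq.comp (continuous_snd.prodMk ((continuous_fst.snd).prodMk (continuous_fst.fst)))

lemma cont3_rev (g : ℝ → ℝ → ℝ → ℝ) (hg : Cont3 g) :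
    Cont3 (fun z y x => g x y z) :=
  hg.comp ((continuous_snd.snd).prodMk ((continuous_snd.fst).prodMk continuous_fst))

lemma cont3_swap12 (g : ℝ → ℝ → ℝ → ℝ) (hg : Cont3 g) :
    Cont3 (fun y x z => g x y z) :=
  hg.comp ((continuous_snd.fst).prodMk (continuous_fst.prodMk continuous_snd.snd))

lemma cont3_swap23 (g : ℝ → ℝ → ℝ → ℝ) (hg : Cont3 g) :
    Cont3 (fun x z y => g x y z) :=
  hg.comp (continuous_fst.prodMk ((continuous_snd.snd).prodMk continuous_snd.fst))

lemma cont3_cyc1 (g : ℝ → ℝ → ℝ → ℝ) (hg : Cont3 g) :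
    Cont3 (fun A B C => g C A B) :=
  hg.comp ((continuous_snd.snd).prodMk (continuous_fst.prodMk continuous_snd.fst))

lemma cont3_cyc2 (g : ℝ → ℝ → ℝ → ℝ) (hg : Cont3 g) :
    Cont3 (fun A B C => g B C A) :=
  hg.comp ((continuous_snd.fst).prodMk ((continuous_snd.snd).prodMk continuous_fst))

lemma cont3_mul (u w : ℝ → ℝ → ℝ → ℝ) (hu : Cont3 u) (hw : Cont3 w) :
    Cont3 (fun x y z => u x y z * w x y z) := hu.mul hw

lemma cont3_sq (u : ℝ → ℝ → ℝ → ℝ) (hu : Cont3 u) :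
    Cont3 (fun x y z => u x y z ^ 2) := hu.pow 2

lemma cont3_absmul (u w : ℝ → ℝ → ℝ → ℝ) (hu : Cont3 u) (hw : Cont3 w) :
    Cont3 (fun x y z => |u x y z * w x y z|) := (hu.mul hw).abs

/-- Fubini for double interval integrals of continuous functions. -/
lemma mySwap2 (F : ℝ → ℝ → ℝ) (hF : Continuous fun p : ℝ × ℝ => F p.1 p.2) :
    (∫ x in (0:ℝ)..1, ∫ y in (0:ℝ)..1, F x y) = ∫ y in (0:ℝ)..1, ∫ x in (0:ℝ)..1, F x y := by
  have key : (∫ x in Ioc (0:ℝ) 1, ∫ y in Ioc (0:ℝ) 1, F x y)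
      = ∫ y in Ioc (0:ℝ) 1, ∫ x in Ioc (0:ℝ) 1, F x y := by
    apply MeasureTheory.integral_integral_swap
    have h : (volume.restrict (Ioc (0:ℝ) 1)).prod (volume.restrict (Ioc (0:ℝ) 1))
        = ((volume : Measure (ℝ × ℝ))).restrict ((Ioc (0:ℝ) 1) ×ˢ (Ioc (0:ℝ) 1)) := by
      rw [Measure.volume_eq_prod, Measure.prod_restrict]
    rw [Function.uncurry_def, h]
    have hsub : ((Ioc (0:ℝ) 1) ×ˢ (Ioc (0:ℝ) 1)) ⊆ ((Icc (0:ℝ) 1) ×ˢ (Icc (0:ℝ) 1)) :=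
      Set.prod_mono Ioc_subset_Icc_self Ioc_subset_Icc_self
    exact (hF.continuousOn.integrableOn_compact (isCompact_Icc.prod isCompact_Icc)).mono_set hsub
  calc (∫ x in (0:ℝ)..1, ∫ y in (0:ℝ)..1, F x y)
      = ∫ x in Ioc (0:ℝ) 1, ∫ y in Ioc (0:ℝ) 1, F x y := by
        rw [intervalIntegral.integral_of_le zero_le_one]
        apply setIntegral_congr_fun measurableSet_Ioc
        intro x _
        show (∫ y in (0:ℝ)..1, F x y) = ∫ y in Ioc (0:ℝ) 1, F x y
        rw [intervalIntegral.integral_of_le zero_le_one]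
    _ = ∫ y in Ioc (0:ℝ) 1, ∫ x in Ioc (0:ℝ) 1, F x y := key
    _ = ∫ y in (0:ℝ)..1, ∫ x in (0:ℝ)..1, F x y := by
        rw [intervalIntegral.integral_of_le zero_le_one]
        apply setIntegral_congr_fun measurableSet_Ioc
        intro y _
        show (∫ x in Ioc (0:ℝ) 1, F x y) = ∫ x in (0:ℝ)..1, F x y
        rw [intervalIntegral.integral_of_le zero_le_one]

/-- Swap the outer two integrals of a triple integral. -/
lemma swap_outer (g : ℝ → ℝ → ℝ → ℝ) (hg : Cont3 g) :
    (∫ x in (0:ℝ)..1, ∫ y in (0:ℝ)..1, ∫ z in (0:ℝ)..1, g x y z)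
      = ∫ y in (0:ℝ)..1, ∫ x in (0:ℝ)..1, ∫ z in (0:ℝ)..1, g x y z :=
  mySwap2 (fun x y => ∫ z in (0:ℝ)..1, g x y z) (contP2 g hg)

/-- Swap the inner two integrals of a triple integral. -/
lemma swap_inner (g : ℝ → ℝ → ℝ → ℝ) (hg : Cont3 g) :
    (∫ x in (0:ℝ)..1, ∫ y in (0:ℝ)..1, ∫ z in (0:ℝ)..1, g x y z)
      = ∫ x in (0:ℝ)..1, ∫ z in (0:ℝ)..1, ∫ y in (0:ℝ)..1, g x y z := by
  apply intervalIntegral.integral_congr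
  intro x _
  show (∫ y in (0:ℝ)..1, ∫ z in (0:ℝ)..1, g x y z) = ∫ z in (0:ℝ)..1, ∫ y in (0:ℝ)..1, g x y z
  exact mySwap2 (fun y z => g x y z)
    (hg.comp (continuous_const.prodMk (continuous_fst.prodMk continuous_snd)))

/-- Rotate a triple integral: move the first variable innermost. -/
lemma rotate3 (g : ℝ → ℝ → ℝ → ℝ) (hg : Cont3 g) :
    (∫ x in (0:ℝ)..1, ∫ y in (0:ℝ)..1, ∫ z in (0:ℝ)..1, g x y z)
      = ∫ y in (0:ℝ)..1, ∫ z in (0:ℝ)..1, ∫ x in (0:ℝ)..1, g x y z := by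
  rw [swap_outer g hg]
  apply intervalIntegral.integral_congr
  intro y _
  show (∫ x in (0:ℝ)..1, ∫ z in (0:ℝ)..1, g x y z) = ∫ z in (0:ℝ)..1, ∫ x in (0:ℝ)..1, g x y z
  exact mySwap2 (fun x z => g x y z)
    (hg.comp (continuous_fst.prodMk (continuous_const.prodMk continuous_snd)))

/-- Full reversal: `∫t∫b∫a q a b t = ∫a∫b∫t q a b t`. -/
lemma reorder_tba (q : ℝ → ℝ → ℝ → ℝ) (hq : Cont3 q) :
    (∫ t in (0:ℝ)..1, ∫ b in (0:ℝ)..1, ∫ a in (0:ℝ)..1, q a b t)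
      = ∫ a in (0:ℝ)..1, ∫ b in (0:ℝ)..1, ∫ t in (0:ℝ)..1, q a b t := by
  have h1 := rotate3 (fun t b a => q a b t) (cont3_rev q hq)
  have h2 := swap_outer (fun X Y Z => q Y X Z) (cont3_swap12 q hq)
  exact h1.trans h2

end Infra

/-! ### Iterated Cauchy–Schwarz -/

section CS

lemma myCS1' (F G : ℝ → ℝ) (hF : Continuous F) (hG : Continuous G)
    (hFnn : ∀ t, 0 ≤ F t) (hGnn : ∀ t, 0 ≤ G t) :
    (∫ t in (0:ℝ)..1, Real.sqrt (F t) * Real.sqrt (G t)) ≤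
      Real.sqrt (∫ t in (0:ℝ)..1, F t) * Real.sqrt (∫ t in (0:ℝ)..1, G t) := by
  have h1 := myCS (fun t => Real.sqrt (F t)) (fun t => Real.sqrt (G t))
    (Real.continuous_sqrt.comp hF) (Real.continuous_sqrt.comp hG)
  have e1 : (∫ t in (0:ℝ)..1, |Real.sqrt (F t) * Real.sqrt (G t)|)
      = ∫ t in (0:ℝ)..1, Real.sqrt (F t) * Real.sqrt (G t) :=
    intervalIntegral.integral_congr fun t _ => abs_of_nonneg
      (mul_nonneg (Real.sqrt_nonneg _) (Real.sqrt_nonneg _))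
  have e2 : (∫ t in (0:ℝ)..1, Real.sqrt (F t) ^ 2) = ∫ t in (0:ℝ)..1, F t :=
    intervalIntegral.integral_congr fun t _ => Real.sq_sqrt (hFnn t)
  have e3 : (∫ t in (0:ℝ)..1, Real.sqrt (G t) ^ 2) = ∫ t in (0:ℝ)..1, G t :=
    intervalIntegral.integral_congr fun t _ => Real.sq_sqrt (hGnn t)
  rw [e1, e2, e3] at h1
  exact h1

/-- CS for double integrals. -/
lemma myCS2 (u w : ℝ → ℝ → ℝ) (hu : Continuous fun p : ℝ × ℝ => u p.1 p.2)
    (hw : Continuous fun p : ℝ × ℝ => w p.1 p.2) :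
    (∫ x in (0:ℝ)..1, ∫ y in (0:ℝ)..1, |u x y * w x y|) ≤
      Real.sqrt (∫ x in (0:ℝ)..1, ∫ y in (0:ℝ)..1, u x y ^ 2) *
        Real.sqrt (∫ x in (0:ℝ)..1, ∫ y in (0:ℝ)..1, w x y ^ 2) := by
  set F := fun x => ∫ y in (0:ℝ)..1, u x y ^ 2 with hF
  set G := fun x => ∫ y in (0:ℝ)..1, w x y ^ 2 with hG
  have hFc : Continuous F := contP1 _ (hu.pow 2)
  have hGc : Continuous G := contP1 _ (hw.pow 2)
  have hFnn : ∀ x, 0 ≤ F x := fun x =>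
    intervalIntegral.integral_nonneg zero_le_one fun t _ => sq_nonneg _
  have hGnn : ∀ x, 0 ≤ G x := fun x =>
    intervalIntegral.integral_nonneg zero_le_one fun t _ => sq_nonneg _
  have step2 : (∫ x in (0:ℝ)..1, ∫ y in (0:ℝ)..1, |u x y * w x y|) ≤
      ∫ x in (0:ℝ)..1, Real.sqrt (F x) * Real.sqrt (G x) := by
    apply intervalIntegral.integral_mono_on zero_le_one
    · exact (contP1 _ ((hu.mul hw).abs)).intervalIntegrable _ _
    · exact ((Real.continuous_sqrt.comp hFc).mul
        (Real.continuous_sqrt.comp hGc)).intervalIntegrable _ _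
    · intro x _
      exact myCS (fun y => u x y) (fun y => w x y)
        (hu.comp (continuous_const.prodMk continuous_id))
        (hw.comp (continuous_const.prodMk continuous_id))
  exact step2.trans (myCS1' F G hFc hGc hFnn hGnn)

/-- CS for triple integrals; the right-hand side is `L2cube u * L2cube w`. -/
lemma myCS3 (u w : ℝ → ℝ → ℝ → ℝ) (hu : Cont3 u) (hw : Cont3 w) :
    (∫ x in (0:ℝ)..1, ∫ y in (0:ℝ)..1, ∫ z in (0:ℝ)..1, |u x y z * w x y z|) ≤
      Real.sqrt (∫ x in (0:ℝ)..1, ∫ y in (0:ℝ)..1, ∫ z in (0:ℝ)..1, u x y z ^ 2) *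
        Real.sqrt (∫ x in (0:ℝ)..1, ∫ y in (0:ℝ)..1, ∫ z in (0:ℝ)..1, w x y z ^ 2) := by
  set F := fun x => ∫ y in (0:ℝ)..1, ∫ z in (0:ℝ)..1, u x y z ^ 2 with hFd
  set G := fun x => ∫ y in (0:ℝ)..1, ∫ z in (0:ℝ)..1, w x y z ^ 2 with hGd
  have hFc : Continuous F := contP12 _ (cont3_sq u hu)
  have hGc : Continuous G := contP12 _ (cont3_sq w hw)
  have hFnn : ∀ x, 0 ≤ F x := fun x =>
    intervalIntegral.integral_nonneg zero_le_one fun b _ =>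
      intervalIntegral.integral_nonneg zero_le_one fun c _ => sq_nonneg _
  have hGnn : ∀ x, 0 ≤ G x := fun x =>
    intervalIntegral.integral_nonneg zero_le_one fun b _ =>
      intervalIntegral.integral_nonneg zero_le_one fun c _ => sq_nonneg _
  have step2 : (∫ x in (0:ℝ)..1, ∫ y in (0:ℝ)..1, ∫ z in (0:ℝ)..1, |u x y z * w x y z|) ≤
      ∫ x in (0:ℝ)..1, Real.sqrt (F x) * Real.sqrt (G x) := by
    apply intervalIntegral.integral_mono_on zero_le_one
    · exact (contP12 _ (cont3_absmul u w hu hw)).intervalIntegrable _ _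
    · exact ((Real.continuous_sqrt.comp hFc).mul
        (Real.continuous_sqrt.comp hGc)).intervalIntegrable _ _
    · intro x _
      exact myCS2 (fun y z => u x y z) (fun y z => w x y z)
        (hu.comp (continuous_const.prodMk (continuous_fst.prodMk continuous_snd)))
        (hw.comp (continuous_const.prodMk (continuous_fst.prodMk continuous_snd)))
  exact step2.trans (myCS1' F G hFc hGc hFnn hGnn)

end CS

/-! ### Smoothness of partial derivatives -/

section Smooth

lemma hasDeriv_slice1 (g : ℝ → ℝ → ℝ → ℝ) (hg : Differentiable ℝ (unc g)) (x y z : ℝ) :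
    HasDerivAt (fun s => g s y z) (fderiv ℝ (unc g) (x, y, z) (1, 0, 0)) x := by
  have h1 : HasFDerivAt (unc g) (fderiv ℝ (unc g) (x, y, z)) (x, y, z) := (hg _).hasFDerivAt
  have h2 : HasDerivAt (fun s : ℝ => (s, y, z)) ((1:ℝ), (0:ℝ), (0:ℝ)) x :=
    (hasDerivAt_id x).prodMk (hasDerivAt_const x (y, z))
  exact h1.comp_hasDerivAt x h2

lemma hasDeriv_slice2 (g : ℝ → ℝ → ℝ → ℝ) (hg : Differentiable ℝ (unc g)) (x y z : ℝ) :
    HasDerivAt (fun s => g x s z) (fderiv ℝ (unc g) (x, y, z) (0, 1, 0)) y := by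
  have h1 : HasFDerivAt (unc g) (fderiv ℝ (unc g) (x, y, z)) (x, y, z) := (hg _).hasFDerivAt
  have h2 : HasDerivAt (fun s : ℝ => (x, s, z)) ((0:ℝ), (1:ℝ), (0:ℝ)) y :=
    (hasDerivAt_const y x).prodMk ((hasDerivAt_id y).prodMk (hasDerivAt_const y z))
  exact h1.comp_hasDerivAt y h2

lemma hasDeriv_slice3 (g : ℝ → ℝ → ℝ → ℝ) (hg : Differentiable ℝ (unc g)) (x y z : ℝ) :
    HasDerivAt (fun s => g x y s) (fderiv ℝ (unc g) (x, y, z) (0, 0, 1)) z := by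
  have h1 : HasFDerivAt (unc g) (fderiv ℝ (unc g) (x, y, z)) (x, y, z) := (hg _).hasFDerivAt
  have h2 : HasDerivAt (fun s : ℝ => (x, y, s)) ((0:ℝ), (0:ℝ), (1:ℝ)) z :=
    (hasDerivAt_const z x).prodMk ((hasDerivAt_const z y).prodMk (hasDerivAt_id z))
  exact h1.comp_hasDerivAt z h2

lemma smooth_d1 (g : ℝ → ℝ → ℝ → ℝ) (hg : ContDiff ℝ (⊤ : ℕ∞) (unc g)) :
    ContDiff ℝ (⊤ : ℕ∞) (unc (d1 g)) := by
  have h : unc (d1 g) = fun p => fderiv ℝ (unc g) p (1, 0, 0) :=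
    funext fun p => (hasDeriv_slice1 g (hg.differentiable (by simp)) p.1 p.2.1 p.2.2).deriv
  rw [h]
  exact (hg.fderiv_right (by simp)).clm_apply contDiff_const

lemma smooth_d2 (g : ℝ → ℝ → ℝ → ℝ) (hg : ContDiff ℝ (⊤ : ℕ∞) (unc g)) :
    ContDiff ℝ (⊤ : ℕ∞) (unc (d2 g)) := by
  have h : unc (d2 g) = fun p => fderiv ℝ (unc g) p (0, 1, 0) :=
    funext fun p => (hasDeriv_slice2 g (hg.differentiable (by simp)) p.1 p.2.1 p.2.2).deriv
  rw [h]
  exact (hg.fderiv_right (by simp)).clm_apply contDiff_const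

lemma smooth_d3 (g : ℝ → ℝ → ℝ → ℝ) (hg : ContDiff ℝ (⊤ : ℕ∞) (unc g)) :
    ContDiff ℝ (⊤ : ℕ∞) (unc (d3 g)) := by
  have h : unc (d3 g) = fun p => fderiv ℝ (unc g) p (0, 0, 1) :=
    funext fun p => (hasDeriv_slice3 g (hg.differentiable (by simp)) p.1 p.2.1 p.2.2).deriv
  rw [h]
  exact (hg.fderiv_right (by simp)).clm_apply contDiff_const

lemma slice1_smooth (g : ℝ → ℝ → ℝ → ℝ) (hg : ContDiff ℝ (⊤ : ℕ∞) (unc g)) (y z : ℝ) :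
    ContDiff ℝ (⊤ : ℕ∞) (fun x => g x y z) := by
  have h : ContDiff ℝ (⊤ : ℕ∞) (fun x : ℝ => (x, y, z)) := contDiff_id.prodMk contDiff_const
  exact hg.comp h

lemma slice2_smooth (g : ℝ → ℝ → ℝ → ℝ) (hg : ContDiff ℝ (⊤ : ℕ∞) (unc g)) (x z : ℝ) :
    ContDiff ℝ (⊤ : ℕ∞) (fun y => g x y z) := by
  have h : ContDiff ℝ (⊤ : ℕ∞) (fun y : ℝ => (x, y, z)) :=
    contDiff_const.prodMk (contDiff_id.prodMk contDiff_const)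
  exact hg.comp h

lemma slice3_smooth (g : ℝ → ℝ → ℝ → ℝ) (hg : ContDiff ℝ (⊤ : ℕ∞) (unc g)) (x y : ℝ) :
    ContDiff ℝ (⊤ : ℕ∞) (fun z => g x y z) := by
  have h : ContDiff ℝ (⊤ : ℕ∞) (fun z : ℝ => (x, y, z)) :=
    contDiff_const.prodMk (contDiff_const.prodMk contDiff_id)
  exact hg.comp h

lemma cont_slice23 (g : ℝ → ℝ → ℝ → ℝ) (hg : Cont3 g) (x : ℝ) :
    Continuous fun p : ℝ × ℝ => g x p.1 p.2 :=
  hg.comp (continuous_const.prodMk (continuous_fst.prodMk continuous_snd))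

end Smooth

/-! ### The 2D layer bound -/

section Key2D

/-- `R₀ f t = ∫∫ f² + 2∫∫|f ∂ₓf|` at level `t` (outer `b`, inner `a`). -/
noncomputable def RR0 (f : ℝ → ℝ → ℝ → ℝ) (t : ℝ) : ℝ :=
  (∫ b in (0:ℝ)..1, ∫ a in (0:ℝ)..1, f a b t ^ 2)
    + 2 * ∫ b in (0:ℝ)..1, ∫ a in (0:ℝ)..1, |f a b t * d1 f a b t|

lemma RR0_nonneg (f : ℝ → ℝ → ℝ → ℝ) (t : ℝ) : 0 ≤ RR0 f t := by
  have h1 : (0:ℝ) ≤ ∫ b in (0:ℝ)..1, ∫ a in (0:ℝ)..1, f a b t ^ 2 :=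
    intervalIntegral.integral_nonneg zero_le_one fun b _ =>
      intervalIntegral.integral_nonneg zero_le_one fun a _ => sq_nonneg _
  have h2 : (0:ℝ) ≤ ∫ b in (0:ℝ)..1, ∫ a in (0:ℝ)..1, |f a b t * d1 f a b t| :=
    intervalIntegral.integral_nonneg zero_le_one fun b _ =>
      intervalIntegral.integral_nonneg zero_le_one fun a _ => abs_nonneg _
  unfold RR0; linarith

lemma RR0_cont (f : ℝ → ℝ → ℝ → ℝ) (hf : Cont3 f) (hf1 : Cont3 (d1 f)) :
    Continuous (RR0 f) := by
  unfold RR0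
  exact (contP_tb _ (cont3_sq f hf)).add
    (continuous_const.mul (contP_tb _ (cont3_absmul f (d1 f) hf hf1)))

/-- Column bound: 1D Agmon in the first variable, integrated in the second. -/
lemma col_bound (g : ℝ → ℝ → ℝ → ℝ) (hg : ContDiff ℝ (⊤ : ℕ∞) (unc g)) (t : ℝ) {x : ℝ}
    (hx : x ∈ Icc (0:ℝ) 1) :
    (∫ b in (0:ℝ)..1, g x b t ^ 2) ≤ RR0 g t := by
  have hg1 : Cont3 (d1 g) := (smooth_d1 g hg).continuous
  have hgc : Cont3 g := hg.continuous
  have hpt : ∀ b ∈ Icc (0:ℝ) 1, g x b t ^ 2 ≤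
      (∫ a in (0:ℝ)..1, g a b t ^ 2) + 2 * ∫ a in (0:ℝ)..1, |g a b t * d1 g a b t| := by
    intro b _
    exact oneD_avg (fun a => g a b t)
      ((slice1_smooth g hg b t).differentiable (by simp))
      (hg1.comp ((continuous_id.prodMk (continuous_const.prodMk continuous_const)) :
        Continuous fun a : ℝ => (a, b, t))) hx
  have hmono : (∫ b in (0:ℝ)..1, g x b t ^ 2) ≤
      ∫ b in (0:ℝ)..1, ((∫ a in (0:ℝ)..1, g a b t ^ 2)
        + 2 * ∫ a in (0:ℝ)..1, |g a b t * d1 g a b t|) := by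
    apply intervalIntegral.integral_mono_on zero_le_one
    · exact ((hgc.comp ((continuous_const.prodMk (continuous_id.prodMk continuous_const)) :
        Continuous fun b : ℝ => (x, b, t))).pow 2).intervalIntegrable _ _
    · apply Continuous.intervalIntegrable
      apply Continuous.add
      · apply intervalIntegral.continuous_parametric_intervalIntegral_of_continuous'
          (f := fun b : ℝ => fun a : ℝ => g a b t ^ 2)
        exact (hgc.comp (continuous_snd.prodMk
          (continuous_fst.prodMk continuous_const))).pow 2
      · apply Continuous.mul continuous_const
        apply intervalIntegral.continuous_parametric_intervalIntegral_of_continuous'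
          (f := fun b : ℝ => fun a : ℝ => |g a b t * d1 g a b t|)
        exact ((hgc.comp (continuous_snd.prodMk (continuous_fst.prodMk continuous_const))).mul
          (hg1.comp (continuous_snd.prodMk (continuous_fst.prodMk continuous_const)))).abs
    · exact hpt
  have hsplit : (∫ b in (0:ℝ)..1, ((∫ a in (0:ℝ)..1, g a b t ^ 2)
      + 2 * ∫ a in (0:ℝ)..1, |g a b t * d1 g a b t|)) = RR0 g t := by
    unfold RR0
    rw [intervalIntegral.integral_add, intervalIntegral.integral_const_mul]
    · apply Continuous.intervalIntegrable
      apply intervalIntegral.continuous_parametric_intervalIntegral_of_continuous'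
        (f := fun b : ℝ => fun a : ℝ => g a b t ^ 2)
      exact (hgc.comp (continuous_snd.prodMk (continuous_fst.prodMk continuous_const))).pow 2
    · apply Continuous.intervalIntegrable
      apply Continuous.mul continuous_const
      apply intervalIntegral.continuous_parametric_intervalIntegral_of_continuous'
        (f := fun b : ℝ => fun a : ℝ => |g a b t * d1 g a b t|)
      exact ((hgc.comp (continuous_snd.prodMk (continuous_fst.prodMk continuous_const))).mul
        (hg1.comp (continuous_snd.prodMk (continuous_fst.prodMk continuous_const)))).abs
  linarith [hmono, hsplit.le, hsplit.ge]

/-- The key 2D (layer-wise) sup bound. -/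
lemma key2d (f : ℝ → ℝ → ℝ → ℝ) (hf : ContDiff ℝ (⊤ : ℕ∞) (unc f)) (t : ℝ)
    {x y : ℝ} (hx : x ∈ Icc (0:ℝ) 1) (hy : y ∈ Icc (0:ℝ) 1) :
    f x y t ^ 2 ≤ RR0 f t + 2 * (Real.sqrt (RR0 f t) * Real.sqrt (RR0 (d2 f) t)) := by
  have hf2 : ContDiff ℝ (⊤ : ℕ∞) (unc (d2 f)) := smooth_d2 f hf
  have hfc : Cont3 f := hf.continuous
  have hf2c : Cont3 (d2 f) := hf2.continuous
  -- Step 1: 1D Agmon in y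
  have A1 : f x y t ^ 2 ≤ (∫ b in (0:ℝ)..1, f x b t ^ 2)
      + 2 * ∫ b in (0:ℝ)..1, |f x b t * d2 f x b t| :=
    oneD_avg (fun b => f x b t) ((slice2_smooth f hf x t).differentiable (by simp))
      (hf2c.comp ((continuous_const.prodMk (continuous_id.prodMk continuous_const)) :
        Continuous fun b : ℝ => (x, b, t))) hy
  -- Step 2a
  have A2 : (∫ b in (0:ℝ)..1, f x b t ^ 2) ≤ RR0 f t := col_bound f hf t hx
  -- Step 2b: CS in b then column bounds
  have A3 : (∫ b in (0:ℝ)..1, |f x b t * d2 f x b t|) ≤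
      Real.sqrt (RR0 f t) * Real.sqrt (RR0 (d2 f) t) := by
    have hCS := myCS (fun b => f x b t) (fun b => d2 f x b t)
      (hfc.comp ((continuous_const.prodMk (continuous_id.prodMk continuous_const)) :
        Continuous fun b : ℝ => (x, b, t)))
      (hf2c.comp ((continuous_const.prodMk (continuous_id.prodMk continuous_const)) :
        Continuous fun b : ℝ => (x, b, t)))
    have hb1 : Real.sqrt (∫ b in (0:ℝ)..1, f x b t ^ 2) ≤ Real.sqrt (RR0 f t) :=
      Real.sqrt_le_sqrt A2
    have hb2 : Real.sqrt (∫ b in (0:ℝ)..1, d2 f x b t ^ 2) ≤ Real.sqrt (RR0 (d2 f) t) :=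
      Real.sqrt_le_sqrt (col_bound (d2 f) hf2 t hx)
    calc (∫ b in (0:ℝ)..1, |f x b t * d2 f x b t|)
        ≤ Real.sqrt (∫ b in (0:ℝ)..1, f x b t ^ 2)
          * Real.sqrt (∫ b in (0:ℝ)..1, d2 f x b t ^ 2) := hCS
      _ ≤ Real.sqrt (RR0 f t) * Real.sqrt (RR0 (d2 f) t) :=
          mul_le_mul hb1 hb2 (Real.sqrt_nonneg _) (Real.sqrt_nonneg _)
  linarith

end Key2D

/-! ### Norm identities and interpolation -/

section Norms

lemma int3_nonneg (g : ℝ → ℝ → ℝ → ℝ) (h : ∀ x y z, 0 ≤ g x y z) :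
    0 ≤ ∫ x in (0:ℝ)..1, ∫ y in (0:ℝ)..1, ∫ z in (0:ℝ)..1, g x y z :=
  intervalIntegral.integral_nonneg zero_le_one fun x _ =>
    intervalIntegral.integral_nonneg zero_le_one fun y _ =>
      intervalIntegral.integral_nonneg zero_le_one fun z _ => h x y z

lemma L2cube_sq (f : ℝ → ℝ → ℝ → ℝ) :
    L2cube f ^ 2 = ∫ x in (0:ℝ)..1, ∫ y in (0:ℝ)..1, ∫ z in (0:ℝ)..1, f x y z ^ 2 :=
  Real.sq_sqrt (int3_nonneg _ fun _ _ _ => sq_nonneg _)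

lemma L2cube_nonneg (f : ℝ → ℝ → ℝ → ℝ) : 0 ≤ L2cube f := Real.sqrt_nonneg _

lemma le_hess11 (f : ℝ → ℝ → ℝ → ℝ) : L2cube (d1 (d1 f)) ≤ hess2 f := by
  unfold hess2
  have h := Real.sqrt_le_sqrt (show (L2cube (d1 (d1 f))) ^ 2 ≤
      (L2cube (d1 (d1 f))) ^ 2 + (L2cube (d1 (d2 f))) ^ 2 +
      (L2cube (d2 (d1 f))) ^ 2 + (L2cube (d2 (d2 f))) ^ 2 by
        nlinarith [sq_nonneg (L2cube (d1 (d2 f))), sq_nonneg (L2cube (d2 (d1 f))),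
          sq_nonneg (L2cube (d2 (d2 f)))])
  rwa [Real.sqrt_sq (L2cube_nonneg _)] at h

lemma le_hess12 (f : ℝ → ℝ → ℝ → ℝ) : L2cube (d1 (d2 f)) ≤ hess2 f := by
  unfold hess2
  have h := Real.sqrt_le_sqrt (show (L2cube (d1 (d2 f))) ^ 2 ≤
      (L2cube (d1 (d1 f))) ^ 2 + (L2cube (d1 (d2 f))) ^ 2 +
      (L2cube (d2 (d1 f))) ^ 2 + (L2cube (d2 (d2 f))) ^ 2 by
        nlinarith [sq_nonneg (L2cube (d1 (d1 f))), sq_nonneg (L2cube (d2 (d1 f))),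
          sq_nonneg (L2cube (d2 (d2 f)))])
  rwa [Real.sqrt_sq (L2cube_nonneg _)] at h

lemma le_hess22 (f : ℝ → ℝ → ℝ → ℝ) : L2cube (d2 (d2 f)) ≤ hess2 f := by
  unfold hess2
  have h := Real.sqrt_le_sqrt (show (L2cube (d2 (d2 f))) ^ 2 ≤
      (L2cube (d1 (d1 f))) ^ 2 + (L2cube (d1 (d2 f))) ^ 2 +
      (L2cube (d2 (d1 f))) ^ 2 + (L2cube (d2 (d2 f))) ^ 2 by
        nlinarith [sq_nonneg (L2cube (d1 (d1 f))), sq_nonneg (L2cube (d1 (d2 f))),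
          sq_nonneg (L2cube (d2 (d1 f)))])
  rwa [Real.sqrt_sq (L2cube_nonneg _)] at h

/-- Interpolation `‖∂ₓf‖² ≤ ‖f‖ ‖∂ₓ²f‖` via integration by parts (periodic in x). -/
lemma interp_x (f : ℝ → ℝ → ℝ → ℝ) (hf : ContDiff ℝ (⊤ : ℕ∞) (unc f))
    (hper : ∀ y z, Function.Periodic (fun x => f x y z) 1) :
    L2cube (d1 f) ^ 2 ≤ L2cube f * L2cube (d1 (d1 f)) := by
  have hf1 : ContDiff ℝ (⊤ : ℕ∞) (unc (d1 f)) := smooth_d1 f hf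
  have hf11 : ContDiff ℝ (⊤ : ℕ∞) (unc (d1 (d1 f))) := smooth_d1 _ hf1
  have cf : Cont3 f := hf.continuous
  have cf1 : Cont3 (d1 f) := hf1.continuous
  have cf11 : Cont3 (d1 (d1 f)) := hf11.continuous
  have E0 := L2cube_sq (d1 f)
  have E1 := rotate3 (fun x y z => d1 f x y z ^ 2) (cont3_sq _ cf1)
  have IBPpt : ∀ y z : ℝ, (∫ x in (0:ℝ)..1, d1 f x y z ^ 2) ≤
      ∫ x in (0:ℝ)..1, |f x y z * d1 (d1 f) x y z| := by
    intro y z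
    have hd : deriv (fun x => f x y z) = fun x => d1 f x y z := rfl
    have hdd : deriv (deriv (fun x => f x y z)) = fun x => d1 (d1 f) x y z := rfl
    have hdiff : Differentiable ℝ (fun x => f x y z) :=
      (slice1_smooth f hf y z).differentiable (by simp)
    have hdiff' : Differentiable ℝ (deriv (fun x => f x y z)) := by
      rw [hd]; exact (slice1_smooth (d1 f) hf1 y z).differentiable (by simp)
    have hcont'' : Continuous (deriv (deriv (fun x => f x y z))) := by
      rw [hdd]
      exact cf11.comp ((continuous_id.prodMk (continuous_const.prodMk continuous_const)) :
        Continuous fun x : ℝ => (x, y, z))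
    have hIBP := myIBP (fun x => f x y z) hdiff hdiff' hcont'' (hper y z)
    rw [hd] at hIBP
    have hdd' : deriv (fun x => d1 f x y z) = fun x => d1 (d1 f) x y z := rfl
    rw [hdd'] at hIBP
    have habs : |∫ x in (0:ℝ)..1, f x y z * d1 (d1 f) x y z| ≤
        ∫ x in (0:ℝ)..1, |f x y z * d1 (d1 f) x y z| := by
      simpa [abs_mul] using intervalIntegral.norm_integral_le_integral_norm (μ := volume)
        (f := fun x => f x y z * d1 (d1 f) x y z) (a := 0) (b := 1) zero_le_one
    have := neg_abs_le (∫ x in (0:ℝ)..1, f x y z * d1 (d1 f) x y z)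
    calc (∫ x in (0:ℝ)..1, d1 f x y z ^ 2)
        = -∫ x in (0:ℝ)..1, f x y z * d1 (d1 f) x y z := hIBP
      _ ≤ |∫ x in (0:ℝ)..1, f x y z * d1 (d1 f) x y z| := neg_le_abs _
      _ ≤ ∫ x in (0:ℝ)..1, |f x y z * d1 (d1 f) x y z| := habs
  have E2 : (∫ y in (0:ℝ)..1, ∫ z in (0:ℝ)..1, ∫ x in (0:ℝ)..1, d1 f x y z ^ 2) ≤
      ∫ y in (0:ℝ)..1, ∫ z in (0:ℝ)..1, ∫ x in (0:ℝ)..1, |f x y z * d1 (d1 f) x y z| := by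
    apply intervalIntegral.integral_mono_on zero_le_one
    · apply Continuous.intervalIntegrable
      exact contP12 (fun y z x => d1 f x y z ^ 2) (cont3_cyc1 _ (cont3_sq _ cf1))
    · apply Continuous.intervalIntegrable
      exact contP12 (fun y z x => |f x y z * d1 (d1 f) x y z|)
        (cont3_cyc1 _ (cont3_absmul _ _ cf cf11))
    · intro y _
      apply intervalIntegral.integral_mono_on zero_le_one
      · apply Continuous.intervalIntegrable
        apply intervalIntegral.continuous_parametric_intervalIntegral_of_continuous'
          (f := fun z : ℝ => fun x : ℝ => d1 f x y z ^ 2)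
        exact (cf1.comp (continuous_snd.prodMk
          (continuous_const.prodMk continuous_fst))).pow 2
      · apply Continuous.intervalIntegrable
        apply intervalIntegral.continuous_parametric_intervalIntegral_of_continuous'
          (f := fun z : ℝ => fun x : ℝ => |f x y z * d1 (d1 f) x y z|)
        exact ((cf.comp (continuous_snd.prodMk (continuous_const.prodMk continuous_fst))).mul
          (cf11.comp (continuous_snd.prodMk (continuous_const.prodMk continuous_fst)))).abs
      · intro z _
        exact IBPpt y z
  have E3 := myCS3 (fun y z x => f x y z) (fun y z x => d1 (d1 f) x y z)
    (cont3_cyc1 _ cf) (cont3_cyc1 _ cf11)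
  have E4 : (∫ y in (0:ℝ)..1, ∫ z in (0:ℝ)..1, ∫ x in (0:ℝ)..1, f x y z ^ 2)
      = ∫ x in (0:ℝ)..1, ∫ y in (0:ℝ)..1, ∫ z in (0:ℝ)..1, f x y z ^ 2 :=
    (rotate3 (fun x y z => f x y z ^ 2) (cont3_sq _ cf)).symm
  have E5 : (∫ y in (0:ℝ)..1, ∫ z in (0:ℝ)..1, ∫ x in (0:ℝ)..1, d1 (d1 f) x y z ^ 2)
      = ∫ x in (0:ℝ)..1, ∫ y in (0:ℝ)..1, ∫ z in (0:ℝ)..1, d1 (d1 f) x y z ^ 2 :=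
    (rotate3 (fun x y z => d1 (d1 f) x y z ^ 2) (cont3_sq _ cf11)).symm
  rw [E4, E5] at E3
  calc L2cube (d1 f) ^ 2
      = ∫ x in (0:ℝ)..1, ∫ y in (0:ℝ)..1, ∫ z in (0:ℝ)..1, d1 f x y z ^ 2 := E0
    _ = ∫ y in (0:ℝ)..1, ∫ z in (0:ℝ)..1, ∫ x in (0:ℝ)..1, d1 f x y z ^ 2 := E1
    _ ≤ ∫ y in (0:ℝ)..1, ∫ z in (0:ℝ)..1, ∫ x in (0:ℝ)..1, |f x y z * d1 (d1 f) x y z| := E2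
    _ ≤ Real.sqrt (∫ x in (0:ℝ)..1, ∫ y in (0:ℝ)..1, ∫ z in (0:ℝ)..1, f x y z ^ 2) *
        Real.sqrt (∫ x in (0:ℝ)..1, ∫ y in (0:ℝ)..1, ∫ z in (0:ℝ)..1,
          d1 (d1 f) x y z ^ 2) := E3
    _ = L2cube f * L2cube (d1 (d1 f)) := rfl

/-- Interpolation `‖∂_y f‖² ≤ ‖f‖ ‖∂_y²f‖` via integration by parts (periodic in y). -/
lemma interp_y (f : ℝ → ℝ → ℝ → ℝ) (hf : ContDiff ℝ (⊤ : ℕ∞) (unc f))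
    (hper : ∀ x z, Function.Periodic (fun y => f x y z) 1) :
    L2cube (d2 f) ^ 2 ≤ L2cube f * L2cube (d2 (d2 f)) := by
  have hf2 : ContDiff ℝ (⊤ : ℕ∞) (unc (d2 f)) := smooth_d2 f hf
  have hf22 : ContDiff ℝ (⊤ : ℕ∞) (unc (d2 (d2 f))) := smooth_d2 _ hf2
  have cf : Cont3 f := hf.continuous
  have cf2 : Cont3 (d2 f) := hf2.continuous
  have cf22 : Cont3 (d2 (d2 f)) := hf22.continuous
  have E0 := L2cube_sq (d2 f)
  have E1 := swap_inner (fun x y z => d2 f x y z ^ 2) (cont3_sq _ cf2)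
  have IBPpt : ∀ x z : ℝ, (∫ y in (0:ℝ)..1, d2 f x y z ^ 2) ≤
      ∫ y in (0:ℝ)..1, |f x y z * d2 (d2 f) x y z| := by
    intro x z
    have hd : deriv (fun y => f x y z) = fun y => d2 f x y z := rfl
    have hdd : deriv (deriv (fun y => f x y z)) = fun y => d2 (d2 f) x y z := rfl
    have hdiff : Differentiable ℝ (fun y => f x y z) :=
      (slice2_smooth f hf x z).differentiable (by simp)
    have hdiff' : Differentiable ℝ (deriv (fun y => f x y z)) := by
      rw [hd]; exact (slice2_smooth (d2 f) hf2 x z).differentiable (by simp)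
    have hcont'' : Continuous (deriv (deriv (fun y => f x y z))) := by
      rw [hdd]
      exact cf22.comp ((continuous_const.prodMk (continuous_id.prodMk continuous_const)) :
        Continuous fun y : ℝ => (x, y, z))
    have hIBP := myIBP (fun y => f x y z) hdiff hdiff' hcont'' (hper x z)
    rw [hd] at hIBP
    have hdd' : deriv (fun y => d2 f x y z) = fun y => d2 (d2 f) x y z := rfl
    rw [hdd'] at hIBP
    have habs : |∫ y in (0:ℝ)..1, f x y z * d2 (d2 f) x y z| ≤
        ∫ y in (0:ℝ)..1, |f x y z * d2 (d2 f) x y z| := by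
      simpa [abs_mul] using intervalIntegral.norm_integral_le_integral_norm (μ := volume)
        (f := fun y => f x y z * d2 (d2 f) x y z) (a := 0) (b := 1) zero_le_one
    calc (∫ y in (0:ℝ)..1, d2 f x y z ^ 2)
        = -∫ y in (0:ℝ)..1, f x y z * d2 (d2 f) x y z := hIBP
      _ ≤ |∫ y in (0:ℝ)..1, f x y z * d2 (d2 f) x y z| := neg_le_abs _
      _ ≤ ∫ y in (0:ℝ)..1, |f x y z * d2 (d2 f) x y z| := habs
  have E2 : (∫ x in (0:ℝ)..1, ∫ z in (0:ℝ)..1, ∫ y in (0:ℝ)..1, d2 f x y z ^ 2) ≤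
      ∫ x in (0:ℝ)..1, ∫ z in (0:ℝ)..1, ∫ y in (0:ℝ)..1, |f x y z * d2 (d2 f) x y z| := by
    apply intervalIntegral.integral_mono_on zero_le_one
    · apply Continuous.intervalIntegrable
      exact contP12 (fun x z y => d2 f x y z ^ 2) (cont3_swap23 _ (cont3_sq _ cf2))
    · apply Continuous.intervalIntegrable
      exact contP12 (fun x z y => |f x y z * d2 (d2 f) x y z|)
        (cont3_swap23 _ (cont3_absmul _ _ cf cf22))
    · intro x _
      apply intervalIntegral.integral_mono_on zero_le_one
      · apply Continuous.intervalIntegrable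
        apply intervalIntegral.continuous_parametric_intervalIntegral_of_continuous'
          (f := fun z : ℝ => fun y : ℝ => d2 f x y z ^ 2)
        exact (cf2.comp (continuous_const.prodMk
          (continuous_snd.prodMk continuous_fst))).pow 2
      · apply Continuous.intervalIntegrable
        apply intervalIntegral.continuous_parametric_intervalIntegral_of_continuous'
          (f := fun z : ℝ => fun y : ℝ => |f x y z * d2 (d2 f) x y z|)
        exact ((cf.comp (continuous_const.prodMk (continuous_snd.prodMk continuous_fst))).mul
          (cf22.comp (continuous_const.prodMk (continuous_snd.prodMk continuous_fst)))).abs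
      · intro z _
        exact IBPpt x z
  have E3 := myCS3 (fun x z y => f x y z) (fun x z y => d2 (d2 f) x y z)
    (cont3_swap23 _ cf) (cont3_swap23 _ cf22)
  have E4 : (∫ x in (0:ℝ)..1, ∫ z in (0:ℝ)..1, ∫ y in (0:ℝ)..1, f x y z ^ 2)
      = ∫ x in (0:ℝ)..1, ∫ y in (0:ℝ)..1, ∫ z in (0:ℝ)..1, f x y z ^ 2 :=
    (swap_inner (fun x y z => f x y z ^ 2) (cont3_sq _ cf)).symm
  have E5 : (∫ x in (0:ℝ)..1, ∫ z in (0:ℝ)..1, ∫ y in (0:ℝ)..1, d2 (d2 f) x y z ^ 2)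
      = ∫ x in (0:ℝ)..1, ∫ y in (0:ℝ)..1, ∫ z in (0:ℝ)..1, d2 (d2 f) x y z ^ 2 :=
    (swap_inner (fun x y z => d2 (d2 f) x y z ^ 2) (cont3_sq _ cf22)).symm
  rw [E4, E5] at E3
  calc L2cube (d2 f) ^ 2
      = ∫ x in (0:ℝ)..1, ∫ y in (0:ℝ)..1, ∫ z in (0:ℝ)..1, d2 f x y z ^ 2 := E0
    _ = ∫ x in (0:ℝ)..1, ∫ z in (0:ℝ)..1, ∫ y in (0:ℝ)..1, d2 f x y z ^ 2 := E1
    _ ≤ ∫ x in (0:ℝ)..1, ∫ z in (0:ℝ)..1, ∫ y in (0:ℝ)..1, |f x y z * d2 (d2 f) x y z| := E2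
    _ ≤ Real.sqrt (∫ x in (0:ℝ)..1, ∫ y in (0:ℝ)..1, ∫ z in (0:ℝ)..1, f x y z ^ 2) *
        Real.sqrt (∫ x in (0:ℝ)..1, ∫ y in (0:ℝ)..1, ∫ z in (0:ℝ)..1,
          d2 (d2 f) x y z ^ 2) := E3
    _ = L2cube f * L2cube (d2 (d2 f)) := rfl

end Norms

/-! ### Integral of RR0 in the vertical variable -/

lemma intRR0_le (f : ℝ → ℝ → ℝ → ℝ) (hf : ContDiff ℝ (⊤ : ℕ∞) (unc f)) :
    (∫ t in (0:ℝ)..1, RR0 f t) ≤ L2cube f ^ 2 + 2 * (L2cube f * L2cube (d1 f)) := by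
  have cf : Cont3 f := hf.continuous
  have cf1 : Cont3 (d1 f) := (smooth_d1 f hf).continuous
  have i1 : IntervalIntegrable (fun t => ∫ b in (0:ℝ)..1, ∫ a in (0:ℝ)..1, f a b t ^ 2)
      volume 0 1 := (contP_tb _ (cont3_sq f cf)).intervalIntegrable _ _
  have i2 : IntervalIntegrable
      (fun t => ∫ b in (0:ℝ)..1, ∫ a in (0:ℝ)..1, |f a b t * d1 f a b t|) volume 0 1 :=
    (contP_tb _ (cont3_absmul f (d1 f) cf cf1)).intervalIntegrable _ _
  have hsplit : (∫ t in (0:ℝ)..1, RR0 f t)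
      = (∫ t in (0:ℝ)..1, ∫ b in (0:ℝ)..1, ∫ a in (0:ℝ)..1, f a b t ^ 2)
        + 2 * ∫ t in (0:ℝ)..1, ∫ b in (0:ℝ)..1, ∫ a in (0:ℝ)..1, |f a b t * d1 f a b t| := by
    unfold RR0
    rw [intervalIntegral.integral_add i1 (i2.const_mul 2), intervalIntegral.integral_const_mul]
  have hre1 : (∫ t in (0:ℝ)..1, ∫ b in (0:ℝ)..1, ∫ a in (0:ℝ)..1, f a b t ^ 2)
      = L2cube f ^ 2 := by
    rw [reorder_tba (fun a b t => f a b t ^ 2) (cont3_sq f cf)]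
    exact (L2cube_sq f).symm
  have hre2 : (∫ t in (0:ℝ)..1, ∫ b in (0:ℝ)..1, ∫ a in (0:ℝ)..1, |f a b t * d1 f a b t|)
      = ∫ a in (0:ℝ)..1, ∫ b in (0:ℝ)..1, ∫ t in (0:ℝ)..1, |f a b t * d1 f a b t| :=
    reorder_tba (fun a b t => |f a b t * d1 f a b t|) (cont3_absmul f (d1 f) cf cf1)
  have hJ : (∫ a in (0:ℝ)..1, ∫ b in (0:ℝ)..1, ∫ t in (0:ℝ)..1, |f a b t * d1 f a b t|)
      ≤ L2cube f * L2cube (d1 f) := myCS3 f (d1 f) cf cf1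
  rw [hsplit, hre1, hre2]
  linarith

lemma le_of_sq_le' {A B : ℝ} (hA : 0 ≤ A) (hB : 0 ≤ B) (h : A ^ 2 ≤ B ^ 2) : A ≤ B := by
  nlinarith

set_option maxHeartbeats 1000000 in
lemma factLemma : ∀ (AA CC PP HH PPs QQs HHs : ℝ), 0 ≤ AA → 0 ≤ CC →
      0 ≤ PPs → 0 ≤ HHs → 0 ≤ QQs →
      PPs ^ 2 = PP → HHs ^ 2 = HH → QQs ^ 2 = PPs * HHs →
      AA ≤ PP ^ 2 + 2 * (PP * (PPs * HHs)) →
      CC ≤ (PPs * HHs) ^ 2 + 2 * ((PPs * HHs) * HH) →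
      Real.sqrt AA + Real.sqrt 2 * Real.sqrt (Real.sqrt AA * Real.sqrt CC)
        ≤ 4 * (QQs + PPs) ^ 2 := by
    intro AA CC PP HH PPs QQs HHs hAA hCC hPPs hHHs hQQs ePP eHH eQQ hA hC
    have m2 : Real.sqrt 2 * Real.sqrt 2 = 2 := Real.mul_self_sqrt (by norm_num)
    have s2nn : (0:ℝ) ≤ Real.sqrt 2 := Real.sqrt_nonneg 2
    have s2 : Real.sqrt 2 ≤ 2 := by nlinarith [m2, Real.sqrt_nonneg 2]
    rw [← ePP, ← eQQ] at hA
    rw [← eHH, ← eQQ] at hC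
    have sqrt_dom : ∀ A B : ℝ, 0 ≤ B → A ≤ B ^ 2 → Real.sqrt A ≤ B := by
      intro A B hB hAB
      calc Real.sqrt A ≤ Real.sqrt (B ^ 2) := Real.sqrt_le_sqrt hAB
        _ = B := Real.sqrt_sq hB
    have hA' : Real.sqrt AA ≤ PPs ^ 2 + Real.sqrt 2 * (PPs * QQs) := by
      apply sqrt_dom _ _ (by positivity)
      have e : (PPs ^ 2 + Real.sqrt 2 * (PPs * QQs)) ^ 2
          = PPs ^ 4 + 2 * Real.sqrt 2 * PPs ^ 3 * QQs + 2 * PPs ^ 2 * QQs ^ 2 := by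
        linear_combination (PPs ^ 2 * QQs ^ 2) * m2
      have hcr : 0 ≤ 2 * Real.sqrt 2 * PPs ^ 3 * QQs := by positivity
      rw [e]
      linarith [hA, hcr]
    have hC' : Real.sqrt CC ≤ QQs ^ 2 + Real.sqrt 2 * (QQs * HHs) := by
      apply sqrt_dom _ _ (by positivity)
      have e : (QQs ^ 2 + Real.sqrt 2 * (QQs * HHs)) ^ 2
          = QQs ^ 4 + 2 * Real.sqrt 2 * QQs ^ 3 * HHs + 2 * QQs ^ 2 * HHs ^ 2 := by
        linear_combination (QQs ^ 2 * HHs ^ 2) * m2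
      have hcr : 0 ≤ 2 * Real.sqrt 2 * QQs ^ 3 * HHs := by positivity
      rw [e]
      linarith [hC, hcr]
    have hm : Real.sqrt AA * Real.sqrt CC
        ≤ (PPs ^ 2 + Real.sqrt 2 * (PPs * QQs)) * (QQs ^ 2 + Real.sqrt 2 * (QQs * HHs)) :=
      mul_le_mul hA' hC' (Real.sqrt_nonneg _) (by positivity)
    have eE : (PPs ^ 2 + Real.sqrt 2 * (PPs * QQs)) * (QQs ^ 2 + Real.sqrt 2 * (QQs * HHs))
        = PPs ^ 2 * QQs ^ 2 + 2 * Real.sqrt 2 * PPs * QQs ^ 3 + 2 * QQs ^ 4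
          + (Real.sqrt 2 * PPs * QQs + 2 * QQs ^ 2) * (PPs * HHs - QQs ^ 2) := by
      linear_combination (PPs * QQs ^ 2 * HHs) * m2
    have eQQ' : PPs * HHs - QQs ^ 2 = 0 := by rw [eQQ]; ring
    have hprod : Real.sqrt AA * Real.sqrt CC ≤ 2 * (PPs + QQs) ^ 4 := by
      have h1 : Real.sqrt AA * Real.sqrt CC
          ≤ PPs ^ 2 * QQs ^ 2 + 2 * Real.sqrt 2 * PPs * QQs ^ 3 + 2 * QQs ^ 4 := by
        rw [eE, eQQ'] at hm
        linarith [hm]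
      nlinarith [h1, s2, mul_nonneg hPPs (pow_nonneg hQQs 3), sq_nonneg PPs, sq_nonneg QQs,
        mul_nonneg (pow_nonneg hPPs 3) hQQs, mul_nonneg (sq_nonneg PPs) (sq_nonneg QQs),
        pow_nonneg hPPs 4]
    have hsp : Real.sqrt (Real.sqrt AA * Real.sqrt CC)
        ≤ Real.sqrt 2 * (PPs + QQs) ^ 2 := by
      apply sqrt_dom _ _ (by positivity)
      have e : (Real.sqrt 2 * (PPs + QQs) ^ 2) ^ 2 = 2 * (PPs + QQs) ^ 4 := by
        linear_combination ((PPs + QQs) ^ 4) * m2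
      rw [e]
      exact hprod
    have e5 : Real.sqrt 2 * (Real.sqrt 2 * (PPs + QQs) ^ 2) = 2 * (PPs + QQs) ^ 2 := by
      linear_combination ((PPs + QQs) ^ 2) * m2
    have hstep := mul_le_mul_of_nonneg_left hsp s2nn
    have hfin : PPs ^ 2 + Real.sqrt 2 * (PPs * QQs) ≤ 2 * (QQs + PPs) ^ 2 := by
      nlinarith [s2, mul_nonneg hPPs hQQs, sq_nonneg QQs, sq_nonneg PPs]
    calc Real.sqrt AA + Real.sqrt 2 * Real.sqrt (Real.sqrt AA * Real.sqrt CC)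
        ≤ (PPs ^ 2 + Real.sqrt 2 * (PPs * QQs)) + Real.sqrt 2
          * (Real.sqrt 2 * (PPs + QQs) ^ 2) := by linarith [hA', hstep]
      _ = (PPs ^ 2 + Real.sqrt 2 * (PPs * QQs)) + 2 * (PPs + QQs) ^ 2 := by rw [e5]
      _ ≤ 4 * (QQs + PPs) ^ 2 := by nlinarith [hfin]

set_option maxHeartbeats 1000000 in
/-- there is a universal constant `C` such that every smooth `v` on
`Ω = 𝕋² × [0,1]` vanishing on the top and bottom boundaries satisfies
`‖v‖_{L^∞(Ω)} ≤ C (‖v‖^{1/4}‖∂''v‖^{1/4} + ‖v‖^{1/2})(‖∂₃v‖^{1/4}‖∂₃∂''v‖^{1/4} + ‖∂₃v‖^{1/2})`. -/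
theorem stmt_3 :
    ∃ C : ℝ, 0 < C ∧
      ∀ v : ℝ → ℝ → ℝ → ℝ,
        ContDiff ℝ (⊤ : ℕ∞) (fun p : ℝ × ℝ × ℝ => v p.1 p.2.1 p.2.2) →
        (∀ x y z : ℝ, v (x + 1) y z = v x y z) →
        (∀ x y z : ℝ, v x (y + 1) z = v x y z) →
        (∀ x y : ℝ, v x y 0 = 0) →
        (∀ x y : ℝ, v x y 1 = 0) →
        ∀ x y : ℝ, ∀ z ∈ Set.Icc (0:ℝ) 1,
          |v x y z| ≤
            C * ((L2cube v ^ ((1:ℝ)/4) * hess2 v ^ ((1:ℝ)/4) + L2cube v ^ ((1:ℝ)/2)) *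
                 (L2cube (d3 v) ^ ((1:ℝ)/4) * hess2 (d3 v) ^ ((1:ℝ)/4) +
                   L2cube (d3 v) ^ ((1:ℝ)/2))) := by
  refine ⟨100, by norm_num, ?_⟩
  intro v hv hper1 hper2 hbot _htop x y z hz
  have hV : ContDiff ℝ (⊤ : ℕ∞) (unc v) := hv
  have hW : ContDiff ℝ (⊤ : ℕ∞) (unc (d3 v)) := smooth_d3 v hV
  have cv : Cont3 v := hV.continuous
  have cw : Cont3 (d3 v) := hW.continuous
  have hV2 : ContDiff ℝ (⊤ : ℕ∞) (unc (d2 v)) := smooth_d2 v hV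
  have hW2 : ContDiff ℝ (⊤ : ℕ∞) (unc (d2 (d3 v))) := smooth_d2 _ hW
  have cv2 : Cont3 (d2 v) := hV2.continuous
  have cw2 : Cont3 (d2 (d3 v)) := hW2.continuous
  have cv1 : Cont3 (d1 v) := (smooth_d1 v hV).continuous
  have cw1 : Cont3 (d1 (d3 v)) := (smooth_d1 _ hW).continuous
  have cv12 : Cont3 (d1 (d2 v)) := (smooth_d1 _ hV2).continuous
  have cw12 : Cont3 (d1 (d2 (d3 v))) := (smooth_d1 _ hW2).continuous
  -- periodicity
  have Pv1 : ∀ y' z', Function.Periodic (fun x' => v x' y' z') 1 := fun y' z' x' =>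
    hper1 x' y' z'
  have Pv2 : ∀ x' z', Function.Periodic (fun y' => v x' y' z') 1 := fun x' z' y' =>
    hper2 x' y' z'
  have Pw1 : ∀ y' z', Function.Periodic (fun x' => d3 v x' y' z') 1 := by
    intro y' z' x'
    show d3 v (x' + 1) y' z' = d3 v x' y' z'
    unfold d3
    congr 1
    funext s
    exact hper1 x' y' s
  have Pw2 : ∀ x' z', Function.Periodic (fun y' => d3 v x' y' z') 1 := by
    intro x' z' y'
    show d3 v x' (y' + 1) z' = d3 v x' y' z'
    unfold d3
    congr 1
    funext s
    exact hper2 x' y' s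
  -- reduce x, y to [0,1]
  obtain ⟨x₀, hx₀, hex⟩ := (Pv1 y z).exists_mem_Ico₀ one_pos x
  obtain ⟨y₀, hy₀, hey⟩ := (Pv2 x₀ z).exists_mem_Ico₀ one_pos y
  have hxy : v x y z = v x₀ y₀ z := hex.trans hey
  have hx0 : x₀ ∈ Icc (0:ℝ) 1 := ⟨hx₀.1, hx₀.2.le⟩
  have hy0 : y₀ ∈ Icc (0:ℝ) 1 := ⟨hy₀.1, hy₀.2.le⟩
  rw [hxy]
  -- the vertical step
  have hZ : v x₀ y₀ z ^ 2 ≤ 2 * ∫ t in (0:ℝ)..1, |v x₀ y₀ t * d3 v x₀ y₀ t| := by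
    have hdiff : Differentiable ℝ (fun s => v x₀ y₀ s) :=
      (slice3_smooth v hV x₀ y₀).differentiable (by simp)
    have hdc : Continuous (fun s => d3 v x₀ y₀ s) :=
      cw.comp ((continuous_const.prodMk (continuous_const.prodMk continuous_id)) :
        Continuous fun s : ℝ => (x₀, y₀, s))
    exact oneD_dir (fun s => v x₀ y₀ s) hdiff hdc (hbot x₀ y₀) hz
  -- layer bounds
  set φ : ℝ → ℝ := fun t => Real.sqrt (RR0 v t) with hφd
  set ψ : ℝ → ℝ := fun t => Real.sqrt (Real.sqrt (RR0 v t) * Real.sqrt (RR0 (d2 v) t)) with hψd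
  set φ' : ℝ → ℝ := fun t => Real.sqrt (RR0 (d3 v) t) with hφ'd
  set ψ' : ℝ → ℝ := fun t =>
    Real.sqrt (Real.sqrt (RR0 (d3 v) t) * Real.sqrt (RR0 (d2 (d3 v)) t)) with hψ'd
  have layer : ∀ (f : ℝ → ℝ → ℝ → ℝ), ContDiff ℝ (⊤ : ℕ∞) (unc f) → ∀ t : ℝ,
      |f x₀ y₀ t| ≤ Real.sqrt (RR0 f t)
        + Real.sqrt 2 * Real.sqrt (Real.sqrt (RR0 f t) * Real.sqrt (RR0 (d2 f) t)) := by
    intro f hf t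
    have h2d := key2d f hf t hx0 hy0
    have hAnn := RR0_nonneg f t
    have hBnn := RR0_nonneg (d2 f) t
    have ha := Real.sqrt_nonneg (RR0 f t)
    have hb := Real.sqrt_nonneg (RR0 (d2 f) t)
    have hab := Real.sqrt_nonneg (Real.sqrt (RR0 f t) * Real.sqrt (RR0 (d2 f) t))
    have h2nn : (0:ℝ) ≤ Real.sqrt 2 := Real.sqrt_nonneg 2
    have ea : Real.sqrt (RR0 f t) ^ 2 = RR0 f t := Real.sq_sqrt hAnn
    have eab : Real.sqrt (Real.sqrt (RR0 f t) * Real.sqrt (RR0 (d2 f) t)) ^ 2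
        = Real.sqrt (RR0 f t) * Real.sqrt (RR0 (d2 f) t) := Real.sq_sqrt (mul_nonneg ha hb)
    have e2 : Real.sqrt 2 ^ 2 = 2 := Real.sq_sqrt (by norm_num)
    have hsq : f x₀ y₀ t ^ 2 ≤ (Real.sqrt (RR0 f t)
        + Real.sqrt 2 * Real.sqrt (Real.sqrt (RR0 f t) * Real.sqrt (RR0 (d2 f) t))) ^ 2 := by
      nlinarith [mul_nonneg (mul_nonneg h2nn ha) hab]
    have hrhs : 0 ≤ Real.sqrt (RR0 f t)
        + Real.sqrt 2 * Real.sqrt (Real.sqrt (RR0 f t) * Real.sqrt (RR0 (d2 f) t)) := by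
      positivity
    calc |f x₀ y₀ t| = Real.sqrt (f x₀ y₀ t ^ 2) := (Real.sqrt_sq_eq_abs _).symm
      _ ≤ Real.sqrt ((Real.sqrt (RR0 f t)
          + Real.sqrt 2 * Real.sqrt (Real.sqrt (RR0 f t) * Real.sqrt (RR0 (d2 f) t))) ^ 2) :=
        Real.sqrt_le_sqrt hsq
      _ = _ := Real.sqrt_sq hrhs
  -- continuity of the layer quantities
  have cRv : Continuous (RR0 v) := RR0_cont v cv cv1
  have cRv2 : Continuous (RR0 (d2 v)) := RR0_cont (d2 v) cv2 cv12
  have cRw : Continuous (RR0 (d3 v)) := RR0_cont (d3 v) cw cw1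
  have cRw2 : Continuous (RR0 (d2 (d3 v))) := RR0_cont (d2 (d3 v)) cw2 cw12
  have cφ : Continuous φ := Real.continuous_sqrt.comp cRv
  have cψ : Continuous ψ :=
    Real.continuous_sqrt.comp ((Real.continuous_sqrt.comp cRv).mul
      (Real.continuous_sqrt.comp cRv2))
  have cφ' : Continuous φ' := Real.continuous_sqrt.comp cRw
  have cψ' : Continuous ψ' :=
    Real.continuous_sqrt.comp ((Real.continuous_sqrt.comp cRw).mul
      (Real.continuous_sqrt.comp cRw2))
  have φnn : ∀ t, 0 ≤ φ t := fun t => Real.sqrt_nonneg _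
  have ψnn : ∀ t, 0 ≤ ψ t := fun t => Real.sqrt_nonneg _
  have φ'nn : ∀ t, 0 ≤ φ' t := fun t => Real.sqrt_nonneg _
  have ψ'nn : ∀ t, 0 ≤ ψ' t := fun t => Real.sqrt_nonneg _
  have sqrt2nn : (0:ℝ) ≤ Real.sqrt 2 := Real.sqrt_nonneg 2
  -- bound the t-integral
  have hmono : (∫ t in (0:ℝ)..1, |v x₀ y₀ t * d3 v x₀ y₀ t|)
      ≤ ∫ t in (0:ℝ)..1, (φ t + Real.sqrt 2 * ψ t) * (φ' t + Real.sqrt 2 * ψ' t) := by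
    apply intervalIntegral.integral_mono_on zero_le_one
    · apply Continuous.intervalIntegrable
      apply Continuous.abs
      exact (cv.comp ((continuous_const.prodMk (continuous_const.prodMk continuous_id)) :
        Continuous fun s : ℝ => (x₀, y₀, s))).mul
        (cw.comp ((continuous_const.prodMk (continuous_const.prodMk continuous_id)) :
        Continuous fun s : ℝ => (x₀, y₀, s)))
    · exact ((cφ.add (continuous_const.mul cψ)).mul
        (cφ'.add (continuous_const.mul cψ'))).intervalIntegrable _ _
    · intro t _
      rw [abs_mul]
      exact mul_le_mul (layer v hV t) (layer (d3 v) hW t) (abs_nonneg _)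
        (by positivity)
  -- expand and apply Cauchy–Schwarz in t
  set aa := ∫ t in (0:ℝ)..1, RR0 v t with haad
  set cc := ∫ t in (0:ℝ)..1, RR0 (d2 v) t with hccd
  set bb := ∫ t in (0:ℝ)..1, RR0 (d3 v) t with hbbd
  set dd := ∫ t in (0:ℝ)..1, RR0 (d2 (d3 v)) t with hddd
  have aann : 0 ≤ aa := intervalIntegral.integral_nonneg zero_le_one fun t _ => RR0_nonneg _ _
  have ccnn : 0 ≤ cc := intervalIntegral.integral_nonneg zero_le_one fun t _ => RR0_nonneg _ _
  have bbnn : 0 ≤ bb := intervalIntegral.integral_nonneg zero_le_one fun t _ => RR0_nonneg _ _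
  have ddnn : 0 ≤ dd := intervalIntegral.integral_nonneg zero_le_one fun t _ => RR0_nonneg _ _
  have iφφ : IntervalIntegrable (fun t => φ t * φ' t) volume 0 1 :=
    (cφ.mul cφ').intervalIntegrable _ _
  have iφψ : IntervalIntegrable (fun t => φ t * ψ' t) volume 0 1 :=
    (cφ.mul cψ').intervalIntegrable _ _
  have iψφ : IntervalIntegrable (fun t => ψ t * φ' t) volume 0 1 :=
    (cψ.mul cφ').intervalIntegrable _ _
  have iψψ : IntervalIntegrable (fun t => ψ t * ψ' t) volume 0 1 :=
    (cψ.mul cψ').intervalIntegrable _ _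
  have expand : (∫ t in (0:ℝ)..1, (φ t + Real.sqrt 2 * ψ t) * (φ' t + Real.sqrt 2 * ψ' t))
      = (∫ t in (0:ℝ)..1, φ t * φ' t)
        + (Real.sqrt 2 * ∫ t in (0:ℝ)..1, φ t * ψ' t)
        + (Real.sqrt 2 * ∫ t in (0:ℝ)..1, ψ t * φ' t)
        + (2 * ∫ t in (0:ℝ)..1, ψ t * ψ' t) := by
    have e : ∀ t ∈ uIcc (0:ℝ) 1, (φ t + Real.sqrt 2 * ψ t) * (φ' t + Real.sqrt 2 * ψ' t)
        = φ t * φ' t + (Real.sqrt 2 * (φ t * ψ' t)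
          + (Real.sqrt 2 * (ψ t * φ' t) + 2 * (ψ t * ψ' t))) := by
      intro t _
      have h2 : Real.sqrt 2 * Real.sqrt 2 = 2 := Real.mul_self_sqrt (by norm_num)
      linear_combination (ψ t * ψ' t) * h2
    rw [intervalIntegral.integral_congr e,
      intervalIntegral.integral_add iφφ ((iφψ.const_mul _).add
        ((iψφ.const_mul _).add (iψψ.const_mul _))),
      intervalIntegral.integral_add (iφψ.const_mul _)
        ((iψφ.const_mul _).add (iψψ.const_mul _)),
      intervalIntegral.integral_add (iψφ.const_mul _) (iψψ.const_mul _),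
      intervalIntegral.integral_const_mul, intervalIntegral.integral_const_mul,
      intervalIntegral.integral_const_mul]
    ring
  have T1 : (∫ t in (0:ℝ)..1, φ t * φ' t) ≤ Real.sqrt aa * Real.sqrt bb :=
    myCS1' (RR0 v) (RR0 (d3 v)) cRv cRw (RR0_nonneg _) (RR0_nonneg _)
  have inner_w : (∫ t in (0:ℝ)..1, Real.sqrt (RR0 (d3 v) t) * Real.sqrt (RR0 (d2 (d3 v)) t))
      ≤ Real.sqrt bb * Real.sqrt dd :=
    myCS1' (RR0 (d3 v)) (RR0 (d2 (d3 v))) cRw cRw2 (RR0_nonneg _) (RR0_nonneg _)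
  have inner_v : (∫ t in (0:ℝ)..1, Real.sqrt (RR0 v t) * Real.sqrt (RR0 (d2 v) t))
      ≤ Real.sqrt aa * Real.sqrt cc :=
    myCS1' (RR0 v) (RR0 (d2 v)) cRv cRv2 (RR0_nonneg _) (RR0_nonneg _)
  have T2 : (∫ t in (0:ℝ)..1, φ t * ψ' t)
      ≤ Real.sqrt aa * Real.sqrt (Real.sqrt bb * Real.sqrt dd) := by
    have h := myCS1' (RR0 v) (fun t => Real.sqrt (RR0 (d3 v) t) * Real.sqrt (RR0 (d2 (d3 v)) t))
      cRv ((Real.continuous_sqrt.comp cRw).mul (Real.continuous_sqrt.comp cRw2))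
      (RR0_nonneg _) (fun t => mul_nonneg (Real.sqrt_nonneg _) (Real.sqrt_nonneg _))
    have h2 : Real.sqrt (∫ t in (0:ℝ)..1, Real.sqrt (RR0 (d3 v) t)
        * Real.sqrt (RR0 (d2 (d3 v)) t)) ≤ Real.sqrt (Real.sqrt bb * Real.sqrt dd) :=
      Real.sqrt_le_sqrt inner_w
    calc (∫ t in (0:ℝ)..1, φ t * ψ' t) ≤ Real.sqrt aa * Real.sqrt (∫ t in (0:ℝ)..1,
        Real.sqrt (RR0 (d3 v) t) * Real.sqrt (RR0 (d2 (d3 v)) t)) := h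
      _ ≤ Real.sqrt aa * Real.sqrt (Real.sqrt bb * Real.sqrt dd) :=
        mul_le_mul_of_nonneg_left h2 (Real.sqrt_nonneg _)
  have T3 : (∫ t in (0:ℝ)..1, ψ t * φ' t)
      ≤ Real.sqrt (Real.sqrt aa * Real.sqrt cc) * Real.sqrt bb := by
    have h := myCS1' (fun t => Real.sqrt (RR0 v t) * Real.sqrt (RR0 (d2 v) t)) (RR0 (d3 v))
      ((Real.continuous_sqrt.comp cRv).mul (Real.continuous_sqrt.comp cRv2)) cRw
      (fun t => mul_nonneg (Real.sqrt_nonneg _) (Real.sqrt_nonneg _)) (RR0_nonneg _)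
    have h2 : Real.sqrt (∫ t in (0:ℝ)..1, Real.sqrt (RR0 v t) * Real.sqrt (RR0 (d2 v) t))
        ≤ Real.sqrt (Real.sqrt aa * Real.sqrt cc) := Real.sqrt_le_sqrt inner_v
    calc (∫ t in (0:ℝ)..1, ψ t * φ' t) ≤ Real.sqrt (∫ t in (0:ℝ)..1,
        Real.sqrt (RR0 v t) * Real.sqrt (RR0 (d2 v) t)) * Real.sqrt bb := h
      _ ≤ Real.sqrt (Real.sqrt aa * Real.sqrt cc) * Real.sqrt bb :=
        mul_le_mul_of_nonneg_right h2 (Real.sqrt_nonneg _)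
  have T4 : (∫ t in (0:ℝ)..1, ψ t * ψ' t)
      ≤ Real.sqrt (Real.sqrt aa * Real.sqrt cc) * Real.sqrt (Real.sqrt bb * Real.sqrt dd) := by
    have h := myCS1' (fun t => Real.sqrt (RR0 v t) * Real.sqrt (RR0 (d2 v) t))
      (fun t => Real.sqrt (RR0 (d3 v) t) * Real.sqrt (RR0 (d2 (d3 v)) t))
      ((Real.continuous_sqrt.comp cRv).mul (Real.continuous_sqrt.comp cRv2))
      ((Real.continuous_sqrt.comp cRw).mul (Real.continuous_sqrt.comp cRw2))
      (fun t => mul_nonneg (Real.sqrt_nonneg _) (Real.sqrt_nonneg _))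
      (fun t => mul_nonneg (Real.sqrt_nonneg _) (Real.sqrt_nonneg _))
    calc (∫ t in (0:ℝ)..1, ψ t * ψ' t)
        ≤ Real.sqrt (∫ t in (0:ℝ)..1, Real.sqrt (RR0 v t) * Real.sqrt (RR0 (d2 v) t))
          * Real.sqrt (∫ t in (0:ℝ)..1, Real.sqrt (RR0 (d3 v) t)
            * Real.sqrt (RR0 (d2 (d3 v)) t)) := h
      _ ≤ Real.sqrt (Real.sqrt aa * Real.sqrt cc)
          * Real.sqrt (Real.sqrt bb * Real.sqrt dd) :=
        mul_le_mul (Real.sqrt_le_sqrt inner_v) (Real.sqrt_le_sqrt inner_w)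
          (Real.sqrt_nonneg _) (Real.sqrt_nonneg _)
  -- combine
  have main2 : v x₀ y₀ z ^ 2 ≤ 2 * ((Real.sqrt aa
      + Real.sqrt 2 * Real.sqrt (Real.sqrt aa * Real.sqrt cc))
      * (Real.sqrt bb + Real.sqrt 2 * Real.sqrt (Real.sqrt bb * Real.sqrt dd))) := by
    have h1 := hZ.trans (by linarith [hmono] :
      (2:ℝ) * ∫ t in (0:ℝ)..1, |v x₀ y₀ t * d3 v x₀ y₀ t|
        ≤ 2 * ∫ t in (0:ℝ)..1, (φ t + Real.sqrt 2 * ψ t) * (φ' t + Real.sqrt 2 * ψ' t))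
    rw [expand] at h1
    have m2 : Real.sqrt 2 * Real.sqrt 2 = 2 := Real.mul_self_sqrt (by norm_num)
    have c2 := mul_le_mul_of_nonneg_left T2 sqrt2nn
    have c3 := mul_le_mul_of_nonneg_left T3 sqrt2nn
    have c4 := mul_le_mul_of_nonneg_left T4 (by norm_num : (0:ℝ) ≤ 2)
    have expand2 : 2 * ((Real.sqrt aa + Real.sqrt 2 * Real.sqrt (Real.sqrt aa * Real.sqrt cc))
        * (Real.sqrt bb + Real.sqrt 2 * Real.sqrt (Real.sqrt bb * Real.sqrt dd)))
        = 2 * (Real.sqrt aa * Real.sqrt bb)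
          + 2 * (Real.sqrt 2 * (Real.sqrt aa * Real.sqrt (Real.sqrt bb * Real.sqrt dd)))
          + 2 * (Real.sqrt 2 * (Real.sqrt (Real.sqrt aa * Real.sqrt cc) * Real.sqrt bb))
          + 4 * (Real.sqrt (Real.sqrt aa * Real.sqrt cc)
            * Real.sqrt (Real.sqrt bb * Real.sqrt dd)) := by
      linear_combination (2 * (Real.sqrt (Real.sqrt aa * Real.sqrt cc)
        * Real.sqrt (Real.sqrt bb * Real.sqrt dd))) * m2
    rw [expand2]
    linarith [h1, T1, c2, c3, c4]
  -- norm bounds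
  have haa : aa ≤ L2cube v ^ 2 + 2 * (L2cube v * L2cube (d1 v)) := intRR0_le v hV
  have hcc : cc ≤ L2cube (d2 v) ^ 2 + 2 * (L2cube (d2 v) * L2cube (d1 (d2 v))) :=
    intRR0_le (d2 v) hV2
  have hbb : bb ≤ L2cube (d3 v) ^ 2 + 2 * (L2cube (d3 v) * L2cube (d1 (d3 v))) :=
    intRR0_le (d3 v) hW
  have hdd : dd ≤ L2cube (d2 (d3 v)) ^ 2
      + 2 * (L2cube (d2 (d3 v)) * L2cube (d1 (d2 (d3 v)))) := intRR0_le (d2 (d3 v)) hW2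
  have hN1v : L2cube (d1 v) ^ 2 ≤ L2cube v * hess2 v :=
    (interp_x v hV Pv1).trans (mul_le_mul_of_nonneg_left (le_hess11 v) (L2cube_nonneg v))
  have hN2v : L2cube (d2 v) ^ 2 ≤ L2cube v * hess2 v :=
    (interp_y v hV Pv2).trans (mul_le_mul_of_nonneg_left (le_hess22 v) (L2cube_nonneg v))
  have hN12v : L2cube (d1 (d2 v)) ≤ hess2 v := le_hess12 v
  have hN1w : L2cube (d1 (d3 v)) ^ 2 ≤ L2cube (d3 v) * hess2 (d3 v) :=
    (interp_x (d3 v) hW Pw1).trans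
      (mul_le_mul_of_nonneg_left (le_hess11 (d3 v)) (L2cube_nonneg (d3 v)))
  have hN2w : L2cube (d2 (d3 v)) ^ 2 ≤ L2cube (d3 v) * hess2 (d3 v) :=
    (interp_y (d3 v) hW Pw2).trans
      (mul_le_mul_of_nonneg_left (le_hess22 (d3 v)) (L2cube_nonneg (d3 v)))
  have hN12w : L2cube (d1 (d2 (d3 v))) ≤ hess2 (d3 v) := le_hess12 (d3 v)
  -- final arithmetic
  set L := L2cube v with hLd
  set Hn := hess2 v with hHd
  set L' := L2cube (d3 v) with hL'd
  set Hn' := hess2 (d3 v) with hH'd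
  have hLnn : 0 ≤ L := L2cube_nonneg v
  have hHnn : 0 ≤ Hn := Real.sqrt_nonneg _
  have hL'nn : 0 ≤ L' := L2cube_nonneg (d3 v)
  have hH'nn : 0 ≤ Hn' := Real.sqrt_nonneg _
  set p := Real.sqrt L with hpd
  set h := Real.sqrt Hn with hhd
  set q := Real.sqrt (Real.sqrt L * Real.sqrt Hn) with hqd
  set p' := Real.sqrt L' with hp'd
  set h' := Real.sqrt Hn' with hh'd
  set q' := Real.sqrt (Real.sqrt L' * Real.sqrt Hn') with hq'd
  have hpnn : 0 ≤ p := Real.sqrt_nonneg _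
  have hhnn : 0 ≤ h := Real.sqrt_nonneg _
  have hqnn : 0 ≤ q := Real.sqrt_nonneg _
  have hp'nn : 0 ≤ p' := Real.sqrt_nonneg _
  have hh'nn : 0 ≤ h' := Real.sqrt_nonneg _
  have hq'nn : 0 ≤ q' := Real.sqrt_nonneg _
  have hp2 : p ^ 2 = L := Real.sq_sqrt hLnn
  have hh2 : h ^ 2 = Hn := Real.sq_sqrt hHnn
  have hq2 : q ^ 2 = p * h := Real.sq_sqrt (mul_nonneg hpnn hhnn)
  have hp'2 : p' ^ 2 = L' := Real.sq_sqrt hL'nn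
  have hh'2 : h' ^ 2 = Hn' := Real.sq_sqrt hH'nn
  have hq'2 : q' ^ 2 = p' * h' := Real.sq_sqrt (mul_nonneg hp'nn hh'nn)
  -- FACT: √aa + √2 √(√aa √cc) ≤ 4 (q+p)²
  have FACT1 : Real.sqrt aa + Real.sqrt 2 * Real.sqrt (Real.sqrt aa * Real.sqrt cc)
      ≤ 4 * (q + p) ^ 2 := by
    apply factLemma aa cc L Hn p q h aann ccnn hpnn hhnn hqnn hp2 hh2 hq2
    · have hN1' : L2cube (d1 v) ≤ p * h := by
        apply le_of_sq_le' (L2cube_nonneg _) (mul_nonneg hpnn hhnn)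
        rw [mul_pow, hp2, hh2]
        exact hN1v
      have := mul_le_mul_of_nonneg_left hN1' hLnn
      linarith [haa]
    · have hN2' : L2cube (d2 v) ≤ p * h := by
        apply le_of_sq_le' (L2cube_nonneg _) (mul_nonneg hpnn hhnn)
        rw [mul_pow, hp2, hh2]
        exact hN2v
      have hsq : L2cube (d2 v) ^ 2 ≤ (p * h) ^ 2 := by
        rw [mul_pow, hp2, hh2]; exact hN2v
      have hcross : L2cube (d2 v) * L2cube (d1 (d2 v)) ≤ (p * h) * Hn :=
        mul_le_mul hN2' hN12v (L2cube_nonneg _) (mul_nonneg hpnn hhnn)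
      linarith [hcc]
  have FACT2 : Real.sqrt bb + Real.sqrt 2 * Real.sqrt (Real.sqrt bb * Real.sqrt dd)
      ≤ 4 * (q' + p') ^ 2 := by
    apply factLemma bb dd L' Hn' p' q' h' bbnn ddnn hp'nn hh'nn hq'nn hp'2 hh'2 hq'2
    · have hN1' : L2cube (d1 (d3 v)) ≤ p' * h' := by
        apply le_of_sq_le' (L2cube_nonneg _) (mul_nonneg hp'nn hh'nn)
        rw [mul_pow, hp'2, hh'2]
        exact hN1w
      have := mul_le_mul_of_nonneg_left hN1' hL'nn
      linarith [hbb]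
    · have hN2' : L2cube (d2 (d3 v)) ≤ p' * h' := by
        apply le_of_sq_le' (L2cube_nonneg _) (mul_nonneg hp'nn hh'nn)
        rw [mul_pow, hp'2, hh'2]
        exact hN2w
      have hsq : L2cube (d2 (d3 v)) ^ 2 ≤ (p' * h') ^ 2 := by
        rw [mul_pow, hp'2, hh'2]; exact hN2w
      have hcross : L2cube (d2 (d3 v)) * L2cube (d1 (d2 (d3 v))) ≤ (p' * h') * Hn' :=
        mul_le_mul hN2' hN12w (L2cube_nonneg _) (mul_nonneg hp'nn hh'nn)
      linarith [hdd]
  -- conclude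
  have hfinal2 : v x₀ y₀ z ^ 2 ≤ 32 * ((q + p) * (q' + p')) ^ 2 := by
    have rhs_nn : 0 ≤ Real.sqrt bb + Real.sqrt 2 * Real.sqrt (Real.sqrt bb * Real.sqrt dd) := by
      positivity
    have hmul := mul_le_mul FACT1 FACT2 rhs_nn (by positivity)
    have h2 : 2 * ((Real.sqrt aa + Real.sqrt 2 * Real.sqrt (Real.sqrt aa * Real.sqrt cc))
        * (Real.sqrt bb + Real.sqrt 2 * Real.sqrt (Real.sqrt bb * Real.sqrt dd)))
        ≤ 2 * ((4 * (q + p) ^ 2) * (4 * (q' + p') ^ 2)) := by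
      apply mul_le_mul_of_nonneg_left hmul (by norm_num)
    have h3 : 2 * ((4 * (q + p) ^ 2) * (4 * (q' + p') ^ 2))
        = 32 * ((q + p) * (q' + p')) ^ 2 := by ring
    linarith [main2, h2]
  have habs : |v x₀ y₀ z| ≤ 6 * ((q + p) * (q' + p')) := by
    have hfac_nn : 0 ≤ (q + p) * (q' + p') := by positivity
    have h36 : (32:ℝ) * ((q + p) * (q' + p')) ^ 2 ≤ (6 * ((q + p) * (q' + p'))) ^ 2 := by
      linarith [sq_nonneg ((q + p) * (q' + p'))]
    calc |v x₀ y₀ z| = Real.sqrt (v x₀ y₀ z ^ 2) := (Real.sqrt_sq_eq_abs _).symm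
      _ ≤ Real.sqrt ((6 * ((q + p) * (q' + p'))) ^ 2) :=
        Real.sqrt_le_sqrt (hfinal2.trans h36)
      _ = 6 * ((q + p) * (q' + p')) := Real.sqrt_sq (by positivity)
  -- identify the right-hand side
  have rq : ∀ (X : ℝ), 0 ≤ X → X ^ ((1:ℝ)/4) = Real.sqrt (Real.sqrt X) := by
    intro X hX
    rw [(show ((1:ℝ)/4) = (1/2 : ℝ) * (1/2 : ℝ) by norm_num), Real.rpow_mul hX,
      ← Real.sqrt_eq_rpow, ← Real.sqrt_eq_rpow]
  have rh : ∀ (X : ℝ), X ^ ((1:ℝ)/2) = Real.sqrt X := fun X => (Real.sqrt_eq_rpow X).symm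
  have eq1 : L ^ ((1:ℝ)/4) * Hn ^ ((1:ℝ)/4) + L ^ ((1:ℝ)/2) = q + p := by
    rw [rq L hLnn, rq Hn hHnn, rh L, hqd, hpd, ← Real.sqrt_mul (Real.sqrt_nonneg L)]
  have eq2 : L' ^ ((1:ℝ)/4) * Hn' ^ ((1:ℝ)/4) + L' ^ ((1:ℝ)/2) = q' + p' := by
    rw [rq L' hL'nn, rq Hn' hH'nn, rh L', hq'd, hp'd, ← Real.sqrt_mul (Real.sqrt_nonneg L')]
  rw [eq1, eq2]
  have hfac_nn : 0 ≤ (q + p) * (q' + p') := by positivity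
  calc |v x₀ y₀ z| ≤ 6 * ((q + p) * (q' + p')) := habs
    _ ≤ 100 * ((q + p) * (q' + p')) := by linarith [hfac_nn]
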